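/- arXiv:2002.05691 — 12 statements merged into one kernel-verified Lean document; each statement's English description precedes it below -/
import Mathlib

section
/- Let G be a non-degenerate CDS instance. There exists a prime p and a CDS scheme for G over F_p with parameters (L, L_Z, N) such that L ≥ 1 and N = L (i.e., achieving the communication rate R = L/(2N) = 1/2) if and only if within every qualified component of G, no unqualified path contains an internal qualified edge. -/
/-- A CDS instance is a graph with qualified edges `Q` and unqualified edges `U`.
The half-rate feasibility condition: within every qualified component, no unqualified
path (walk with distinct edges, all of whose vertices lie in one qualified component)
contains an internal qualified edge (a qualified edge joining two vertices of the path). -/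
def NoInternalQualifiedEdge {V : Type*} (Q U : SimpleGraph V) : Prop :=
  ∀ ⦃v u : V⦄ (w : U.Walk v u), w.IsTrail →
    (∀ x ∈ w.support, Q.connectedComponentMk x = Q.connectedComponentMk v) →
    ∀ x ∈ w.support, ∀ y ∈ w.support, ¬ Q.Adj x y

/-- Correctness of a CDS scheme `φ` (signals are deterministic functions of the secret
`s : Fin L → ZMod p` and the noise `z : Fin LZ → ZMod p`): for every qualified edge
`{v,u}`, the secret is determined by the pair of signals. -/
def CDSCorrect {V : Type*} (Q : SimpleGraph V) {p L LZ N : ℕ}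
    (φ : V → (Fin L → ZMod p) → (Fin LZ → ZMod p) → (Fin N → ZMod p)) : Prop :=
  ∀ v u : V, Q.Adj v u →
    ∃ g : (Fin N → ZMod p) → (Fin N → ZMod p) → (Fin L → ZMod p),
      ∀ s z, g (φ v s z) (φ u s z) = s

/-- Security of a CDS scheme `φ`: for every unqualified edge `{v,u}`, the pair of signals
is statistically independent of the secret; since the secret and noise are uniform and
independent, this says the number of noise values producing any given pair of signals
does not depend on the secret. -/
def CDSSecure {V : Type*} (U : SimpleGraph V) {p L LZ N : ℕ}
    (φ : V → (Fin L → ZMod p) → (Fin LZ → ZMod p) → (Fin N → ZMod p)) : Prop :=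
  ∀ v u : V, U.Adj v u → ∀ (s₁ s₂ : Fin L → ZMod p) (a b : Fin N → ZMod p),
    Nat.card {z : Fin LZ → ZMod p // φ v s₁ z = a ∧ φ u s₁ z = b} =
    Nat.card {z : Fin LZ → ZMod p // φ v s₂ z = a ∧ φ u s₂ z = b}

/-!
Let `H` be the graph of unqualified edges whose endpoints lie in a common qualified component.
The condition on paths says exactly that no qualified edge joins two `H`-reachable vertices.

Given a scheme with `N = L` and a qualified edge `xy`, fix a signal `a` of `x`. The decoder
`g a` is a self-map of `F_p^L`, and it is onto because, by security on an unqualified edge at `x`,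
every secret is compatible with `a`; hence it is injective, so for a fixed secret the signal of
`x` determines that of `y`. This propagates along qualified paths, and security then transports
equal signals across every `H`-edge regardless of the secret. A qualified edge inside an
`H`-component would therefore let the decoder return two different secrets on the same signals.

Conversely, take a prime `p` exceeding the number of `H`-components, give each `H`-component a
different colour `c ∈ F_p` and each qualified component `K` one noise symbol `z_K`, and send
`c v * s + z_K` from `v ∈ K`. The endpoints of a qualified edge share `z_K` but not the colour,
so the secret is decoded; for an unqualified edge, shifting the noise by `c * (s₁ - s₂)` on the
at most two qualified components involved turns the signals for `s₂` into those for `s₁`.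
-/

open SimpleGraph

def unqualifiedWithin {V : Type*} (Q U : SimpleGraph V) : SimpleGraph V where
  Adj a b := U.Adj a b ∧ Q.Reachable a b
  symm := ⟨fun _ _ h => ⟨h.1.symm, h.2.symm⟩⟩
  loopless := ⟨fun a h => U.loopless.irrefl a h.1⟩

lemma SimpleGraph.Walk.reachable_of_mem_support {V : Type*} {G : SimpleGraph V} {a b t : V}
    (w : G.Walk a b) (ht : t ∈ w.support) : G.Reachable a t := by
  classical
  exact ⟨w.takeUntil t ht⟩

section Combinatorics

variable {V : Type*} {Q U : SimpleGraph V}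

lemma unqualifiedWithin_le : unqualifiedWithin Q U ≤ U := fun _ _ h => h.1

lemma SimpleGraph.Reachable.of_unqualifiedWithin {a b : V}
    (h : (unqualifiedWithin Q U).Reachable a b) : Q.Reachable a b := by
  obtain ⟨w⟩ := h
  induction w with
  | nil => rfl
  | cons hadj _ ih => exact hadj.2.trans ih

lemma unqualifiedWithin_reachable_of_mem_support {v u x y : V} (w : U.Walk v u)
    (hw : ∀ t ∈ w.support, Q.Reachable v t) (hx : x ∈ w.support) (hy : y ∈ w.support) :
    (unqualifiedWithin Q U).Reachable x y := by
  have hedges : ∀ e ∈ w.edges, e ∈ (unqualifiedWithin Q U).edgeSet := by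
    intro e he
    induction e with
    | h a b =>
      exact ⟨w.edges_subset_edgeSet he,
        (hw a (w.fst_mem_support_of_mem_edges he)).symm.trans
          (hw b (w.snd_mem_support_of_mem_edges he))⟩
  let w' := w.transfer _ hedges
  rw [← w.support_transfer hedges] at hx hy
  exact (w'.reachable_of_mem_support hx).symm.trans (w'.reachable_of_mem_support hy)

lemma noInternalQualifiedEdge_iff :
    NoInternalQualifiedEdge Q U ↔
      ∀ x y, Q.Adj x y → ¬ (unqualifiedWithin Q U).Reachable x y := by
  classical
  constructor
  · rintro h x y hxy ⟨w⟩
    let path := (w.mapLe unqualifiedWithin_le).bypass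
    have hsupp : ∀ t ∈ path.support, t ∈ w.support := fun t ht => by
      simpa using (w.mapLe unqualifiedWithin_le).support_bypass_subset_support ht
    refine h path (Walk.bypass_isPath _).isTrail (fun t ht => ?_) x path.start_mem_support
      y path.end_mem_support hxy
    exact ConnectedComponent.eq.2
      (Reachable.of_unqualifiedWithin (w.reachable_of_mem_support (hsupp t ht))).symm
  · intro h v u w _ hcomp x hx y hy hxy
    refine h x y hxy (unqualifiedWithin_reachable_of_mem_support w (fun t ht => ?_) hx hy)
    exact (ConnectedComponent.eq.1 (hcomp t ht)).symm

end Combinatorics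

section Necessity

variable {V : Type*} {Q U : SimpleGraph V} {p L LZ : ℕ} [NeZero p]

lemma CDSSecure.exists_noise {N : ℕ}
    {φ : V → (Fin L → ZMod p) → (Fin LZ → ZMod p) → (Fin N → ZMod p)}
    (hsec : CDSSecure U φ) {v u : V} (hvu : U.Adj v u) (s₁ s₂ : Fin L → ZMod p)
    (z : Fin LZ → ZMod p) : ∃ z', φ v s₂ z' = φ v s₁ z ∧ φ u s₂ z' = φ u s₁ z := by
  have hne : Nonempty {z' // φ v s₁ z' = φ v s₁ z ∧ φ u s₁ z' = φ u s₁ z} := ⟨⟨z, rfl, rfl⟩⟩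
  rw [← Finite.card_pos_iff, hsec v u hvu s₁ s₂, Finite.card_pos_iff] at hne
  obtain ⟨z', hz'⟩ := hne
  exact ⟨z', hz'⟩

variable {φ : V → (Fin L → ZMod p) → (Fin LZ → ZMod p) → (Fin L → ZMod p)}
  (hcor : CDSCorrect Q φ) (hsec : CDSSecure U φ) (hnd : ∀ v : V, ∃ u : V, U.Adj v u)
include hcor hsec hnd

lemma CDSCorrect.eq_of_qualified {x y : V} (hxy : Q.Adj x y) (s : Fin L → ZMod p)
    {z₁ z₂ : Fin LZ → ZMod p} (hx : φ x s z₁ = φ x s z₂) : φ y s z₁ = φ y s z₂ := by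
  obtain ⟨g, hg⟩ := hcor x y hxy
  obtain ⟨u, hxu⟩ := hnd x
  have hsurj : Function.Surjective (g (φ x s z₁)) := fun s' => by
    obtain ⟨z', hz', -⟩ := hsec.exists_noise hxu s s' z₁
    exact ⟨φ y s' z', by rw [← hz', hg]⟩
  refine Finite.injective_iff_surjective.2 hsurj ?_
  calc g (φ x s z₁) (φ y s z₁) = s := hg s z₁
    _ = g (φ x s z₁) (φ y s z₂) := by rw [hx, hg]

lemma CDSCorrect.eq_of_reachable {x y : V} (hxy : Q.Reachable x y) (s : Fin L → ZMod p)
    {z₁ z₂ : Fin LZ → ZMod p} (hx : φ x s z₁ = φ x s z₂) : φ y s z₁ = φ y s z₂ := by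
  obtain ⟨w⟩ := hxy
  induction w with
  | nil => exact hx
  | cons hadj _ ih => exact ih (hcor.eq_of_qualified hsec hnd hadj s hx)

lemma CDSCorrect.eq_of_unqualifiedWithin_adj {x y : V} (hxy : (unqualifiedWithin Q U).Adj x y)
    {s₁ s₂ : Fin L → ZMod p} {z₁ z₂ : Fin LZ → ZMod p} (hx : φ x s₁ z₁ = φ x s₂ z₂) :
    φ y s₁ z₁ = φ y s₂ z₂ := by
  obtain ⟨z, hzx, hzy⟩ := hsec.exists_noise hxy.1 s₁ s₂ z₁
  rw [← hzy]
  exact hcor.eq_of_reachable hsec hnd hxy.2 s₂ (hzx.trans hx)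

lemma CDSCorrect.eq_of_unqualifiedWithin_reachable {x y : V}
    (hxy : (unqualifiedWithin Q U).Reachable x y)
    {s₁ s₂ : Fin L → ZMod p} {z₁ z₂ : Fin LZ → ZMod p} (hx : φ x s₁ z₁ = φ x s₂ z₂) :
    φ y s₁ z₁ = φ y s₂ z₂ := by
  obtain ⟨w⟩ := hxy
  induction w with
  | nil => exact hx
  | cons hadj _ ih => exact ih (hcor.eq_of_unqualifiedWithin_adj hsec hnd hadj hx)

lemma CDSCorrect.not_unqualifiedWithin_reachable [Nontrivial (Fin L → ZMod p)] {x y : V}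
    (hxy : Q.Adj x y) : ¬ (unqualifiedWithin Q U).Reachable x y := by
  intro hreach
  obtain ⟨s₁, s₂, hs⟩ := exists_pair_ne (Fin L → ZMod p)
  obtain ⟨u, hxu⟩ := hnd x
  obtain ⟨z, hzx, -⟩ := hsec.exists_noise hxu s₁ s₂ 0
  have hzy := hcor.eq_of_unqualifiedWithin_reachable hsec hnd hreach hzx
  obtain ⟨g, hg⟩ := hcor x y hxy
  exact hs (by rw [← hg s₁ 0, ← hg s₂ z, hzx, hzy])

end Necessity

section Construction

variable {V : Type*} {Q U : SimpleGraph V}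

lemma cdsSecure_of_exists_shift {p L LZ N : ℕ}
    {φ : V → (Fin L → ZMod p) → (Fin LZ → ZMod p) → (Fin N → ZMod p)}
    (h : ∀ v u, U.Adj v u → ∀ s₁ s₂, ∃ d, ∀ z,
      φ v s₂ (z + d) = φ v s₁ z ∧ φ u s₂ (z + d) = φ u s₁ z) :
    CDSSecure U φ := by
  intro v u hvu s₁ s₂ a b
  obtain ⟨d, hd⟩ := h v u hvu s₁ s₂
  exact Nat.card_congr <| (Equiv.addRight d).subtypeEquiv fun z => by
    rw [Equiv.coe_addRight, (hd z).1, (hd z).2]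

def colorScheme {p m : ℕ} (c : V → ZMod p) (κ : V → Fin m) :
    V → (Fin 1 → ZMod p) → (Fin m → ZMod p) → (Fin 1 → ZMod p) :=
  fun v s z _ => c v * s 0 + z (κ v)

lemma cdsCorrect_colorScheme {p m : ℕ} [Fact p.Prime] {c : V → ZMod p} {κ : V → Fin m}
    (h : ∀ v u, Q.Adj v u → κ v = κ u ∧ c v ≠ c u) : CDSCorrect Q (colorScheme c κ) := by
  intro v u hvu
  obtain ⟨hκ, hc⟩ := h v u hvu
  refine ⟨fun a b _ => (c v - c u)⁻¹ * (a 0 - b 0), fun s z => funext fun i => ?_⟩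
  rw [Subsingleton.elim i 0]
  have : c v - c u ≠ 0 := sub_ne_zero.2 hc
  simp only [colorScheme, hκ]
  field_simp
  ring

lemma cdsSecure_colorScheme {p m : ℕ} {c : V → ZMod p} {κ : V → Fin m}
    (h : ∀ v u, U.Adj v u → κ v = κ u → c v = c u) : CDSSecure U (colorScheme c κ) := by
  refine cdsSecure_of_exists_shift fun v u hvu s₁ s₂ => ?_
  refine ⟨fun j => (if j = κ v then c v else c u) * (s₁ 0 - s₂ 0), fun z => ⟨?_, ?_⟩⟩
  · funext
    simp only [colorScheme, Pi.add_apply, ↓reduceIte]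
    ring
  · funext
    by_cases hκ : κ u = κ v
    · simp only [colorScheme, Pi.add_apply, if_pos hκ, h v u hvu hκ.symm]
      ring
    · simp only [colorScheme, Pi.add_apply, if_neg hκ]
      ring

end Construction

lemma exists_halfRate_cds_of_not_reachable {V : Type*} [Finite V] {Q U : SimpleGraph V}
    (h : ∀ x y, Q.Adj x y → ¬ (unqualifiedWithin Q U).Reachable x y) :
    ∃ p L LZ : ℕ, p.Prime ∧ 1 ≤ L ∧
      ∃ φ : V → (Fin L → ZMod p) → (Fin LZ → ZMod p) → (Fin L → ZMod p),
        CDSCorrect Q φ ∧ CDSSecure U φ := by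
  set H := unqualifiedWithin Q U
  obtain ⟨p, hcard, hp⟩ := Nat.exists_infinite_primes (Nat.card H.ConnectedComponent)
  have := Fact.mk hp
  have := Fintype.ofFinite H.ConnectedComponent
  obtain ⟨e⟩ : Nonempty (H.ConnectedComponent ↪ ZMod p) :=
    Function.Embedding.nonempty_of_card_le (by rwa [ZMod.card, ← Nat.card_eq_fintype_card])
  obtain ⟨m, ⟨eQ⟩⟩ := Finite.exists_equiv_fin Q.ConnectedComponent
  let c v := e (H.connectedComponentMk v)
  let κ v := eQ (Q.connectedComponentMk v)
  have hc v u : c v = c u ↔ H.Reachable v u := e.injective.eq_iff.trans ConnectedComponent.eq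
  have hκ v u : κ v = κ u ↔ Q.Reachable v u := eQ.injective.eq_iff.trans ConnectedComponent.eq
  refine ⟨p, 1, m, hp, le_rfl, colorScheme c κ, cdsCorrect_colorScheme fun v u hvu => ?_,
    cdsSecure_colorScheme fun v u hvu hκvu => ?_⟩
  · exact ⟨(hκ v u).2 hvu.reachable, fun hcvu => h v u hvu ((hc v u).1 hcvu)⟩
  · exact (hc v u).2 (Adj.reachable ⟨hvu, (hκ v u).1 hκvu⟩)

theorem cds_half_rate_iff_general {V : Type*} [Fintype V] (Q U : SimpleGraph V)
    (hnd : ∀ v : V, ∃ u : V, U.Adj v u) :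
    (∃ p L LZ : ℕ, p.Prime ∧ 1 ≤ L ∧
      ∃ φ : V → (Fin L → ZMod p) → (Fin LZ → ZMod p) → (Fin L → ZMod p),
        CDSCorrect Q φ ∧ CDSSecure U φ) ↔
      NoInternalQualifiedEdge Q U := by
  rw [noInternalQualifiedEdge_iff]
  refine ⟨fun ⟨p, L, LZ, hp, hL, φ, hcor, hsec⟩ x y hxy => ?_,
    exists_halfRate_cds_of_not_reachable⟩
  have := Fact.mk hp
  have : Nonempty (Fin L) := ⟨⟨0, hL⟩⟩
  exact hcor.not_unqualifiedWithin_reachable hsec hnd hxy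

/-- For a non-degenerate CDS instance `(Q, U)`, there exist a prime `p` and a
CDS scheme over `F_p` with parameters `(L, L_Z, N)`, `L ≥ 1` and `N = L` (rate `1/2`),
if and only if within every qualified component no unqualified path contains an internal
qualified edge. -/
theorem cds_half_rate_iff {V : Type*} [Fintype V] (Q U : SimpleGraph V)
    (hdisj : ∀ v u : V, ¬ (Q.Adj v u ∧ U.Adj v u))
    (hnd : ∀ v : V, ∃ u : V, U.Adj v u) :
    (∃ p L LZ : ℕ, p.Prime ∧ 1 ≤ L ∧
      ∃ φ : V → (Fin L → ZMod p) → (Fin LZ → ZMod p) → (Fin L → ZMod p),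
        CDSCorrect Q φ ∧ CDSSecure U φ) ↔
      NoInternalQualifiedEdge Q U :=
  cds_half_rate_iff_general Q U hnd
end

section
/- Let G be a CDS instance such that within every qualified component no unqualified path contains an internal qualified edge. Let Q_1, …, Q_M be the qualified components of G and let U_m be the number of unqualified components within Q_m. Let p be a prime with p > max(U_1, …, U_M), and let c_1, c_2, … be distinct nonzero elements of F_p. Let s be uniformly distributed on F_p and let z_1, …, z_M be i.i.d. uniform on F_p, independent of s, and assign to every vertex in the i-th unqualified component of Q_m the signal s + c_i · z_m. Then this assignment is a valid CDS scheme with L = N = 1 and L_Z = M: for every qualified edge {v,u} the secret s is determined by the pair of signals (v,u), and for every unqualified edge {v,u} the pair of signals (v,u) is statistically independent of s. In particular, rate 1/2 is achievable. -/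
/-- `v` and `u` belong to the same unqualified component within a qualified component:
they lie in the same qualified component and are joined by an unqualified path all of
whose vertices stay in that qualified component. -/
def SameUnqualComp {V : Type*} (Q U : SimpleGraph V) (v u : V) : Prop :=
  Q.Reachable v u ∧ ∃ w : U.Walk v u, ∀ x ∈ w.support, Q.Reachable x v

/-- Suppose the CDS instance `(Q, U)` satisfies the half-rate feasibility
condition. Enumerate its qualified components as `Q_1, …, Q_M` (the map `m` sends each
vertex to the index of its qualified component), and let `γ v = c_i` be the distinct
nonzero coefficients of `F_p` assigned to the unqualified components within each
qualified component (`γ` is constant exactly on unqualified components within a common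
qualified component, and nonzero).  With the secret `s` uniform on `F_p` and noise
`z = (z_1, …, z_M)` uniform on `F_p^M` independent of `s`, assigning to each vertex `v`
the signal `s + c_i · z_m = s + γ v * z (m v)` gives a valid CDS scheme with
`L = N = 1`, `L_Z = M`: every qualified edge can decode the secret and every unqualified
edge reveals nothing (the pair of signals is independent of the secret).  In particular
rate `1/2` is achievable. -/
theorem cds_half_rate_scheme {V : Type*} (Q U : SimpleGraph V)
    (hdisj : ∀ v u : V, ¬ (Q.Adj v u ∧ U.Adj v u))
    (hcond : NoInternalQualifiedEdge Q U)
    (p : ℕ) (hp : p.Prime) (M : ℕ)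
    (m : V → Fin M)
    (hm : ∀ v u : V, m v = m u ↔ Q.Reachable v u)
    (hmsurj : Function.Surjective m)
    (γ : V → ZMod p)
    (hγ0 : ∀ v : V, γ v ≠ 0)
    (hγ : ∀ v u : V, Q.Reachable v u → (γ v = γ u ↔ SameUnqualComp Q U v u)) :
    (∀ v u : V, Q.Adj v u →
      ∃ g : ZMod p → ZMod p → ZMod p,
        ∀ (s : ZMod p) (z : Fin M → ZMod p),
          g (s + γ v * z (m v)) (s + γ u * z (m u)) = s) ∧
    (∀ v u : V, U.Adj v u → ∀ s₁ s₂ a b : ZMod p,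
      Nat.card {z : Fin M → ZMod p // s₁ + γ v * z (m v) = a ∧ s₁ + γ u * z (m u) = b} =
      Nat.card {z : Fin M → ZMod p // s₂ + γ v * z (m v) = a ∧ s₂ + γ u * z (m u) = b}) := by
  haveI := Fact.mk hp
  classical
  constructor
  · -- decodability on qualified edges
    intro v u hvu
    have hreach : Q.Reachable v u := hvu.reachable
    have hmvu : m v = m u := (hm v u).2 hreach
    have hne : γ v ≠ γ u := by
      intro heq
      obtain ⟨-, w, hw⟩ := (hγ v u hreach).1 heq
      have hb := hcond w.bypass w.bypass_isPath.isTrail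
        (fun x hx => by
          rw [SimpleGraph.ConnectedComponent.eq]
          exact hw x (w.support_bypass_subset hx))
        v w.bypass.start_mem_support u w.bypass.end_mem_support
      exact hb hvu
    have hd0 : γ v - γ u ≠ 0 := sub_ne_zero.2 hne
    refine ⟨fun a b => a - γ v * ((a - b) * (γ v - γ u)⁻¹), ?_⟩
    intro s z
    dsimp only
    rw [hmvu]
    have h1 : (s + γ v * z (m u)) - (s + γ u * z (m u)) = (γ v - γ u) * z (m u) := by
      ring
    rw [h1, mul_comm (γ v - γ u), mul_assoc, mul_inv_cancel₀ hd0, mul_one]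
    ring
  · -- privacy on unqualified edges
    intro v u hvu s₁ s₂ a b
    have hγu : m v = m u → γ v = γ u := by
      intro h
      have hreach := (hm v u).1 h
      refine (hγ v u hreach).2 ⟨hreach, SimpleGraph.Walk.cons hvu SimpleGraph.Walk.nil, ?_⟩
      intro x hx
      simp [SimpleGraph.Walk.support_cons, SimpleGraph.Walk.support_nil] at hx
      rcases hx with rfl | rfl
      · exact SimpleGraph.Reachable.refl x
      · exact hreach.symm
    set δ : Fin M → ZMod p := fun i =>
      if i = m v then (s₁ - s₂) * (γ v)⁻¹
      else if i = m u then (s₁ - s₂) * (γ u)⁻¹ else 0 with hδ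
    have key_v : γ v * δ (m v) = s₁ - s₂ := by
      simp only [hδ, if_pos rfl]
      rw [mul_comm, mul_assoc, inv_mul_cancel₀ (hγ0 v), mul_one]
    have key_u : γ u * δ (m u) = s₁ - s₂ := by
      by_cases h : m u = m v
      · have hg := hγu h.symm
        simp only [hδ, if_pos h, hg, if_true]
        rw [mul_comm, mul_assoc, inv_mul_cancel₀ (hγ0 u), mul_one]
      · simp only [hδ, if_neg h, if_pos rfl, if_true]
        rw [mul_comm, mul_assoc, inv_mul_cancel₀ (hγ0 u), mul_one]
    refine Nat.card_congr (Equiv.mk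
      (fun z => ⟨fun i => z.1 i + δ i, ?_, ?_⟩)
      (fun z => ⟨fun i => z.1 i - δ i, ?_, ?_⟩) ?_ ?_)
    · have := z.2.1
      have h2 : γ v * (z.1 (m v) + δ (m v)) = γ v * z.1 (m v) + (s₁ - s₂) := by
        rw [mul_add, key_v]
      rw [h2]; linear_combination this
    · have := z.2.2
      have h2 : γ u * (z.1 (m u) + δ (m u)) = γ u * z.1 (m u) + (s₁ - s₂) := by
        rw [mul_add, key_u]
      rw [h2]; linear_combination this
    · have := z.2.1
      have h2 : γ v * (z.1 (m v) - δ (m v)) = γ v * z.1 (m v) - (s₁ - s₂) := by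
        rw [mul_sub, key_v]
      rw [h2]; linear_combination this
    · have := z.2.2
      have h2 : γ u * (z.1 (m u) - δ (m u)) = γ u * z.1 (m u) - (s₁ - s₂) := by
        rw [mul_sub, key_u]
      rw [h2]; linear_combination this
    · intro z; ext i; simp
    · intro z; ext i; simp
end

section
/- Let G be a CDS instance such that within every qualified component no unqualified path contains an internal qualified edge. Let Q_1, …, Q_M be the qualified components of G and let U_m be the number of unqualified components within Q_m. Let p be a prime with p > max(U_1, …, U_M, M−2), and let c_1, c_2, … be distinct nonzero elements of F_p. Let s, z_1, z_2 be i.i.d. uniform on F_p, and define z_3 = z_1 + z_2, z_4 = z_1 + 2·z_2, …, z_M = z_1 + (M−2)·z_2. Assign to every vertex in the i-th unqualified component of Q_m the signal s + c_i · z_m. Then this assignment is a valid CDS scheme with L = N = 1 and only L_Z = 2 noise symbols: for every qualified edge {v,u} the secret s is determined by the pair of signals (v,u), and for every unqualified edge {v,u} the pair of signals (v,u) is statistically independent of s. Hence rate 1/2 is achievable with randomness rate 1/2. -/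
/-- The noise symbol `z_k` derived from the two base noise symbols `w = (z_1, z_2)`:
`z_1` and `z_2` are the base symbols, and `z_k = z_1 + (k-2)·z_2` for `k ≥ 3`. -/
def derivedNoise (p : ℕ) (k : ℕ) (w : Fin 2 → ZMod p) : ZMod p :=
  if k = 1 then w 0 else if k = 2 then w 1 else w 0 + ((k - 2 : ℕ) : ZMod p) * w 1

/-!
On a qualified edge both endpoints lie in one qualified component, hence share the noise
`z_m`, while the feasibility condition puts them in different unqualified components, so their
coefficients differ and the two equations `s + c z`, `s + c' z` can be solved for `s`.
On an unqualified edge either both endpoints share `z_m` and, being in the same unqualified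
component, also the coefficient, or they carry two different derived noises; any two of
`z_1, …, z_{p+1}` are linearly independent in `(z_1, z_2)`. In both cases some shift of
`(z_1, z_2)` absorbs any change of the secret, so all secrets have equally large fibres.
-/

theorem NoInternalQualifiedEdge.not_sameUnqualComp {V : Type*} {Q U : SimpleGraph V}
    (hcond : NoInternalQualifiedEdge Q U) {v u : V} (hadj : Q.Adj v u) :
    ¬ SameUnqualComp Q U v u := by
  classical
  rintro ⟨-, w, hw⟩
  have hcomp (x) (hx : x ∈ w.bypass.support) :
      Q.connectedComponentMk x = Q.connectedComponentMk v :=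
    SimpleGraph.ConnectedComponent.sound (hw x (w.support_bypass_subset_support hx))
  exact hcond w.bypass w.bypass_isPath.isTrail hcomp
    v w.bypass.start_mem_support u w.bypass.end_mem_support hadj

theorem SimpleGraph.Adj.sameUnqualComp {V : Type*} {Q U : SimpleGraph V} {v u : V}
    (hadj : U.Adj v u) (hreach : Q.Reachable v u) : SameUnqualComp Q U v u := by
  refine ⟨hreach, hadj.toWalk, fun x hx => ?_⟩
  rcases (by simpa using hx : x = v ∨ x = u) with rfl | rfl
  exacts [.refl x, hreach.symm]

theorem exists_decoder {F : Type*} [Field F] {x y : F} (hxy : x ≠ y) :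
    ∃ g : F → F → F, ∀ s z : F, g (s + x * z) (s + y * z) = s := by
  have hyx : y - x ≠ 0 := sub_ne_zero.2 hxy.symm
  exact ⟨fun a b => (y * a - x * b) / (y - x), fun s z => by field_simp; ring⟩

/-- One-time pad: shifting the noise by `δ` carries the fibres of secret `s₁` onto those of `s₂`. -/
theorem card_fiber_eq_of_shift {G R : Type*} [AddGroup G] [AddCommGroup R] (f g : G →+ R)
    {δ : G} {s₁ s₂ : R} (hf : f δ = s₁ - s₂) (hg : g δ = s₁ - s₂) (a b : R) :
    Nat.card {w : G // s₁ + f w = a ∧ s₁ + g w = b} =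
      Nat.card {w : G // s₂ + f w = a ∧ s₂ + g w = b} := by
  refine Nat.card_congr (Equiv.subtypeEquiv (Equiv.addRight δ) fun w => ?_)
  have hshift (h : G →+ R) (hh : h δ = s₁ - s₂) : s₂ + h (w + δ) = s₁ + h w := by
    rw [map_add, hh]; abel
  simp only [Equiv.coe_addRight, hshift f hf, hshift g hg]

section DerivedNoise

variable {p : ℕ}

theorem derivedNoise_two (w : Fin 2 → ZMod p) : derivedNoise p 2 w = w 1 := rfl

/-- Since `1 - 2 = 0` in `ℕ`, the formula for `k ≥ 3` also covers `z_1 = z_1 + 0 · z_2`. -/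
theorem derivedNoise_of_ne_two {k : ℕ} (hk : k ≠ 2) (w : Fin 2 → ZMod p) :
    derivedNoise p k w = w 0 + ((k - 2 : ℕ) : ZMod p) * w 1 := by
  unfold derivedNoise
  split_ifs with h1
  · simp [h1]
  · rfl

theorem derivedNoise_add (k : ℕ) (w δ : Fin 2 → ZMod p) :
    derivedNoise p k (w + δ) = derivedNoise p k w + derivedNoise p k δ := by
  unfold derivedNoise
  split_ifs <;> simp only [Pi.add_apply]
  ring

def derivedNoiseHom (p k : ℕ) : (Fin 2 → ZMod p) →+ ZMod p where
  toFun := derivedNoise p k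
  map_zero' := by unfold derivedNoise; split_ifs <;> simp
  map_add' := derivedNoise_add k

theorem exists_derivedNoise_eq (k : ℕ) (t : ZMod p) :
    ∃ δ : Fin 2 → ZMod p, derivedNoise p k δ = t := by
  by_cases hk : k = 2
  · exact ⟨![0, t], by simp [hk, derivedNoise_two]⟩
  · exact ⟨![t, 0], by simp [derivedNoise_of_ne_two hk]⟩

theorem exists_affine_pair_eq {F : Type*} [Field F] {σ τ : F} (hστ : σ ≠ τ) (t₁ t₂ : F) :
    ∃ w : Fin 2 → F, w 0 + σ * w 1 = t₁ ∧ w 0 + τ * w 1 = t₂ := by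
  have hτσ : τ - σ ≠ 0 := sub_ne_zero.2 hστ.symm
  set y := (t₂ - t₁) / (τ - σ) with hy
  refine ⟨![t₁ - σ * y, y], by simp, ?_⟩
  simp only [Matrix.cons_val_zero, Matrix.cons_val_one]
  rw [hy]; field_simp; ring

theorem exists_derivedNoise_pair_eq [Fact p.Prime] {k l : ℕ} (hk : 1 ≤ k) (hkp : k - 2 < p)
    (hl : 1 ≤ l) (hlp : l - 2 < p) (hkl : k ≠ l) (t₁ t₂ : ZMod p) :
    ∃ δ : Fin 2 → ZMod p, derivedNoise p k δ = t₁ ∧ derivedNoise p l δ = t₂ := by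
  by_cases hk2 : k = 2
  · subst hk2
    refine ⟨![t₂ - ((l - 2 : ℕ) : ZMod p) * t₁, t₁], by simp [derivedNoise_two], ?_⟩
    simp [derivedNoise_of_ne_two (Ne.symm hkl)]
  by_cases hl2 : l = 2
  · subst hl2
    refine ⟨![t₁ - ((k - 2 : ℕ) : ZMod p) * t₂, t₂], ?_, by simp [derivedNoise_two]⟩
    simp [derivedNoise_of_ne_two hkl]
  have hcast : ((k - 2 : ℕ) : ZMod p) ≠ ((l - 2 : ℕ) : ZMod p) := by
    rw [Ne, ZMod.natCast_eq_natCast_iff', Nat.mod_eq_of_lt hkp, Nat.mod_eq_of_lt hlp]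
    omega
  simpa only [derivedNoise_of_ne_two hk2, derivedNoise_of_ne_two hl2]
    using exists_affine_pair_eq hcast t₁ t₂

theorem exists_mul_derivedNoise_pair_eq [Fact p.Prime] {k l : ℕ} (hk : 1 ≤ k)
    (hkp : k - 2 < p) (hl : 1 ≤ l) (hlp : l - 2 < p) {γ₁ γ₂ : ZMod p} (hγ₁ : γ₁ ≠ 0)
    (hγ₂ : γ₂ ≠ 0) (hγ : k = l → γ₁ = γ₂) (c : ZMod p) :
    ∃ δ : Fin 2 → ZMod p, γ₁ * derivedNoise p k δ = c ∧ γ₂ * derivedNoise p l δ = c := by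
  by_cases hkl : k = l
  · subst hkl
    obtain rfl := hγ rfl
    obtain ⟨δ, hδ⟩ := exists_derivedNoise_eq k (c / γ₁)
    exact ⟨δ, by rw [hδ, mul_div_cancel₀ c hγ₁], by rw [hδ, mul_div_cancel₀ c hγ₁]⟩
  · obtain ⟨δ, hδ₁, hδ₂⟩ := exists_derivedNoise_pair_eq hk hkp hl hlp hkl (c / γ₁) (c / γ₂)
    exact ⟨δ, by rw [hδ₁, mul_div_cancel₀ c hγ₁], by rw [hδ₂, mul_div_cancel₀ c hγ₂]⟩

end DerivedNoise

theorem cds_half_rate_scheme_two_noise_general {V : Type*} (Q U : SimpleGraph V)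
    (hcond : NoInternalQualifiedEdge Q U)
    (p : ℕ) (hp : p.Prime) (M : ℕ) (hMp : M - 2 < p)
    (m : V → ℕ)
    (hm1 : ∀ v : V, 1 ≤ m v ∧ m v ≤ M)
    (hm : ∀ v u : V, m v = m u ↔ Q.Reachable v u)
    (γ : V → ZMod p)
    (hγ0 : ∀ v : V, γ v ≠ 0)
    (hγ : ∀ v u : V, Q.Reachable v u → (γ v = γ u ↔ SameUnqualComp Q U v u)) :
    (∀ v u : V, Q.Adj v u →
      ∃ g : ZMod p → ZMod p → ZMod p,
        ∀ (s : ZMod p) (w : Fin 2 → ZMod p),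
          g (s + γ v * derivedNoise p (m v) w) (s + γ u * derivedNoise p (m u) w) = s) ∧
    (∀ v u : V, U.Adj v u → ∀ s₁ s₂ a b : ZMod p,
      Nat.card {w : Fin 2 → ZMod p //
          s₁ + γ v * derivedNoise p (m v) w = a ∧ s₁ + γ u * derivedNoise p (m u) w = b} =
      Nat.card {w : Fin 2 → ZMod p //
          s₂ + γ v * derivedNoise p (m v) w = a ∧ s₂ + γ u * derivedNoise p (m u) w = b}) := by
  have : Fact p.Prime := ⟨hp⟩
  refine ⟨fun v u hadj => ?_, fun v u hadj s₁ s₂ a b => ?_⟩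
  · have hγne : γ v ≠ γ u := fun h =>
      hcond.not_sameUnqualComp hadj ((hγ v u hadj.reachable).1 h)
    obtain ⟨g, hg⟩ := exists_decoder hγne
    exact ⟨g, fun s w => by rw [(hm v u).2 hadj.reachable]; exact hg s _⟩
  · have hsame (h : m v = m u) : γ v = γ u :=
      (hγ v u ((hm v u).1 h)).2 (hadj.sameUnqualComp ((hm v u).1 h))
    obtain ⟨δ, hδv, hδu⟩ := exists_mul_derivedNoise_pair_eq (hm1 v).1 (by grind)
      (hm1 u).1 (by grind) (hγ0 v) (hγ0 u) hsame (s₁ - s₂)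
    exact card_fiber_eq_of_shift ((AddMonoidHom.mulLeft (γ v)).comp (derivedNoiseHom p (m v)))
      ((AddMonoidHom.mulLeft (γ u)).comp (derivedNoiseHom p (m u))) hδv hδu a b

/-- Randomness-cost reduction of the half-rate scheme.  Let `(Q, U)` satisfy
the half-rate feasibility condition, let `Q_1, …, Q_M` be its qualified components
(the map `m` sends each vertex to the index `1 ≤ m v ≤ M` of its qualified component),
and let `γ v = c_i ≠ 0` be the distinct nonzero coefficients assigned to the unqualified
components within each qualified component.  Let `p` be a prime with `p > M - 2` (and
large enough that the distinct nonzero `c_i` exist, which is implicit in `γ`).  With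
`s, z_1, z_2` i.i.d. uniform on `F_p` and the derived noises
`z_3 = z_1 + z_2, …, z_M = z_1 + (M-2)·z_2`, assigning to each vertex `v` the signal
`s + c_i · z_{m v}` gives a valid CDS scheme with `L = N = 1` and only `L_Z = 2` noise
symbols: every qualified edge can decode the secret and for every unqualified edge the
pair of signals is independent of the secret.  Hence rate `1/2` is achievable with
randomness rate `1/2`. -/
theorem cds_half_rate_scheme_two_noise {V : Type*} (Q U : SimpleGraph V)
    (hdisj : ∀ v u : V, ¬ (Q.Adj v u ∧ U.Adj v u))
    (hcond : NoInternalQualifiedEdge Q U)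
    (p : ℕ) (hp : p.Prime) (M : ℕ) (hMp : M - 2 < p)
    (m : V → ℕ)
    (hm1 : ∀ v : V, 1 ≤ m v ∧ m v ≤ M)
    (hm : ∀ v u : V, m v = m u ↔ Q.Reachable v u)
    (hmsurj : ∀ k : ℕ, 1 ≤ k → k ≤ M → ∃ v : V, m v = k)
    (γ : V → ZMod p)
    (hγ0 : ∀ v : V, γ v ≠ 0)
    (hγ : ∀ v u : V, Q.Reachable v u → (γ v = γ u ↔ SameUnqualComp Q U v u)) :
    (∀ v u : V, Q.Adj v u →
      ∃ g : ZMod p → ZMod p → ZMod p,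
        ∀ (s : ZMod p) (w : Fin 2 → ZMod p),
          g (s + γ v * derivedNoise p (m v) w) (s + γ u * derivedNoise p (m u) w) = s) ∧
    (∀ v u : V, U.Adj v u → ∀ s₁ s₂ a b : ZMod p,
      Nat.card {w : Fin 2 → ZMod p //
          s₁ + γ v * derivedNoise p (m v) w = a ∧ s₁ + γ u * derivedNoise p (m u) w = b} =
      Nat.card {w : Fin 2 → ZMod p //
          s₂ + γ v * derivedNoise p (m v) w = a ∧ s₂ + γ u * derivedNoise p (m u) w = b}) :=
  cds_half_rate_scheme_two_noise_general Q U hcond p hp M hMp m hm1 hm γ hγ0 hγ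
end

section
/- (Signal and Noise Size) Let G be a non-degenerate CDS instance and consider a CDS scheme for G over F_p with parameters (L, L_Z, N) where N = L (rate 1/2). Then for every vertex v that is incident to at least one qualified edge, H(v) = H(v | S) = L in p-ary units; equivalently, the signal v is uniformly distributed on F_p^L and is statistically independent of the secret S. -/
open scoped BigOperators

/-- Probability that the random variable `X`, defined on a finite sample space `Ω`
equipped with the uniform distribution, takes the value `a`. -/
noncomputable def prb {Ω α : Type*} [Fintype Ω] (X : Ω → α) (a : α) : ℝ :=
  (Nat.card {ω : Ω // X ω = a} : ℝ) / (Fintype.card Ω : ℝ)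

/-- Shannon entropy, in `p`-ary units (logarithm base `p`), of the random variable `X`
defined on a finite sample space `Ω` equipped with the uniform distribution. -/
noncomputable def entp (p : ℕ) {Ω α : Type*} [Fintype Ω] [Fintype α] (X : Ω → α) : ℝ :=
  ∑ a : α, -(prb X a * Real.logb p (prb X a))

section auxCDS

variable {Ω α β : Type*} [Fintype Ω] [Fintype β]

/-- The cardinality of a finite type is the sum of the cardinalities of the fibers of
any map `Y` out of it. -/
lemma cds_card_fiber_sum (Y : Ω → β) :
    Nat.card Ω = ∑ b : β, Nat.card {ω : Ω // Y ω = b} := by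
  classical
  calc Nat.card Ω = Nat.card ((b : β) × {ω : Ω // Y ω = b}) :=
        (Nat.card_congr (Equiv.sigmaFiberEquiv Y)).symm
    _ = Fintype.card ((b : β) × {ω : Ω // Y ω = b}) := Nat.card_eq_fintype_card
    _ = ∑ b : β, Fintype.card {ω : Ω // Y ω = b} := Fintype.card_sigma
    _ = ∑ b : β, Nat.card {ω : Ω // Y ω = b} := by
        simp [Nat.card_eq_fintype_card]

/-- Refining a fiber of `X` by the fibers of a second map `Y`. -/
lemma cds_card_fiber_sum_and (X : Ω → α) (Y : Ω → β) (a : α) :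
    Nat.card {ω : Ω // X ω = a} =
      ∑ b : β, Nat.card {ω : Ω // X ω = a ∧ Y ω = b} := by
  classical
  rw [cds_card_fiber_sum (fun w : {ω : Ω // X ω = a} => Y w.1)]
  refine Finset.sum_congr rfl fun b _ => Nat.card_congr ?_
  exact ⟨fun w => ⟨w.1.1, w.1.2, w.2⟩, fun w => ⟨⟨w.1, w.2.1⟩, w.2.2⟩,
    fun w => rfl, fun w => rfl⟩

/-- The `p`-ary entropy of a uniformly distributed random variable with values in a type
of cardinality `p ^ k` equals `k`. -/
lemma cds_entp_uniform (p k : ℕ) (hp : 1 < p) [Fintype α] (X : Ω → α)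
    (hcard : Fintype.card α = p ^ k)
    (h : ∀ a, prb X a = ((p : ℝ) ^ k)⁻¹) :
    entp p X = k := by
  have hp1 : (1 : ℝ) < (p : ℝ) := by exact_mod_cast hp
  have hp0 : (0 : ℝ) < (p : ℝ) ^ k := by positivity
  simp only [entp, h, Real.logb_inv, mul_neg, neg_neg]
  rw [Finset.sum_const, Finset.card_univ, hcard, nsmul_eq_mul,
    Real.logb_pow, Real.logb_self_eq_one hp1]
  push_cast
  field_simp

end auxCDS

/-- Signal and Noise Size: For a non-degenerate CDS instance `(Q, U)` and a
CDS scheme over `F_p` with `N = L` (rate `1/2`), every vertex `v` incident to at least one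
qualified edge satisfies `H(v) = H(v | S) = L` in `p`-ary units, where the sample space is
the secret–noise pair `(S, Z)` uniform on `F_p^L × F_p^{L_Z}` and `H(v | S) = H(v, S) − H(S)`. -/
theorem cds_signal_noise_size {V : Type*} [Fintype V] (Q U : SimpleGraph V)
    (p L LZ : ℕ) (hp : p.Prime) [NeZero p]
    (hdisj : ∀ v u : V, ¬ (Q.Adj v u ∧ U.Adj v u))
    (hnd : ∀ v : V, ∃ u : V, U.Adj v u)
    (φ : V → (Fin L → ZMod p) → (Fin LZ → ZMod p) → (Fin L → ZMod p))
    (hcorr : CDSCorrect Q φ) (hsec : CDSSecure U φ)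
    (v : V) (hv : ∃ u : V, Q.Adj v u) :
    entp p (fun ω : (Fin L → ZMod p) × (Fin LZ → ZMod p) => φ v ω.1 ω.2) = L ∧
    entp p (fun ω : (Fin L → ZMod p) × (Fin LZ → ZMod p) => (φ v ω.1 ω.2, ω.1)) -
        entp p (fun ω : (Fin L → ZMod p) × (Fin LZ → ZMod p) => ω.1) = L := by
  classical
  obtain ⟨u, hqu⟩ := hv
  obtain ⟨w, hw⟩ := hnd v
  obtain ⟨w', hw'⟩ := hnd u
  obtain ⟨g, hg⟩ := hcorr v u hqu
  -- cardinalities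
  have hcardS : Fintype.card (Fin L → ZMod p) = p ^ L := by
    simp [Fintype.card_fun, ZMod.card]
  have hcardZ : Fintype.card (Fin LZ → ZMod p) = p ^ LZ := by
    simp [Fintype.card_fun, ZMod.card]
  have hncardZ : Nat.card (Fin LZ → ZMod p) = p ^ LZ := by
    rw [Nat.card_eq_fintype_card, hcardZ]
  -- (Fin L → ZMod p)ep 1: fibers of the signal at `v` have size independent of the secret (security at v–w)
  have hcv : ∀ (s₁ s₂ : (Fin L → ZMod p)) (a : Fin L → ZMod p),
      Nat.card {z : (Fin LZ → ZMod p) // φ v s₁ z = a} = Nat.card {z : (Fin LZ → ZMod p) // φ v s₂ z = a} := by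
    intro s₁ s₂ a
    rw [cds_card_fiber_sum_and (fun z : (Fin LZ → ZMod p) => φ v s₁ z) (fun z : (Fin LZ → ZMod p) => φ w s₁ z) a,
      cds_card_fiber_sum_and (fun z : (Fin LZ → ZMod p) => φ v s₂ z) (fun z : (Fin LZ → ZMod p) => φ w s₂ z) a]
    exact Finset.sum_congr rfl fun b _ => hsec v w hw s₁ s₂ a b
  -- same for `u` (security at u–w')
  have hcu : ∀ (s₁ s₂ : (Fin L → ZMod p)) (b : Fin L → ZMod p),
      Nat.card {z : (Fin LZ → ZMod p) // φ u s₁ z = b} = Nat.card {z : (Fin LZ → ZMod p) // φ u s₂ z = b} := by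
    intro s₁ s₂ b
    rw [cds_card_fiber_sum_and (fun z : (Fin LZ → ZMod p) => φ u s₁ z) (fun z : (Fin LZ → ZMod p) => φ w' s₁ z) b,
      cds_card_fiber_sum_and (fun z : (Fin LZ → ZMod p) => φ u s₂ z) (fun z : (Fin LZ → ZMod p) => φ w' s₂ z) b]
    exact Finset.sum_congr rfl fun c _ => hsec u w' hw' s₁ s₂ b c
  -- decomposition of the fibers over the sample space, according to the secret
  have heqv : ∀ (s : (Fin L → ZMod p)) (a : Fin L → ZMod p),
      Nat.card {ω : (Fin L → ZMod p) × (Fin LZ → ZMod p) // φ v ω.1 ω.2 = a ∧ ω.1 = s} =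
        Nat.card {z : (Fin LZ → ZMod p) // φ v s z = a} := by
    intro s a
    refine Nat.card_congr ⟨fun ω => ⟨ω.1.2, ?_⟩, fun z => ⟨(s, z.1), z.2, rfl⟩, ?_, ?_⟩
    · have h1 := ω.2.1
      rw [ω.2.2] at h1
      exact h1
    · rintro ⟨⟨s', z⟩, h1, rfl⟩
      rfl
    · intro z
      rfl
  have hdecomp : ∀ a : Fin L → ZMod p,
      Nat.card {ω : (Fin L → ZMod p) × (Fin LZ → ZMod p) // φ v ω.1 ω.2 = a} =
        ∑ s : (Fin L → ZMod p), Nat.card {z : (Fin LZ → ZMod p) // φ v s z = a} := by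
    intro a
    rw [cds_card_fiber_sum_and (fun ω : (Fin L → ZMod p) × (Fin LZ → ZMod p) => φ v ω.1 ω.2) (fun ω : (Fin L → ZMod p) × (Fin LZ → ZMod p) => ω.1) a]
    exact Finset.sum_congr rfl fun s _ => heqv s a
  -- (Fin L → ZMod p)ep 2: upper bound, via correctness at `v–u` and security at `u–w'`
  have hub : ∀ a : Fin L → ZMod p,
      Nat.card {ω : (Fin L → ZMod p) × (Fin LZ → ZMod p) // φ v ω.1 ω.2 = a} ≤ p ^ LZ := by
    intro a
    rw [cds_card_fiber_sum_and (fun ω : (Fin L → ZMod p) × (Fin LZ → ZMod p) => φ v ω.1 ω.2)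
      (fun ω : (Fin L → ZMod p) × (Fin LZ → ZMod p) => φ u ω.1 ω.2) a]
    calc ∑ b : Fin L → ZMod p,
          Nat.card {ω : (Fin L → ZMod p) × (Fin LZ → ZMod p) // φ v ω.1 ω.2 = a ∧ φ u ω.1 ω.2 = b}
        ≤ ∑ b : Fin L → ZMod p, Nat.card {z : (Fin LZ → ZMod p) // φ u (g a b) z = b} := by
          refine Finset.sum_le_sum fun b _ => ?_
          have hfix : ∀ ω : {ω : (Fin L → ZMod p) × (Fin LZ → ZMod p) // φ v ω.1 ω.2 = a ∧ φ u ω.1 ω.2 = b},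
              g a b = ω.1.1 := by
            intro ω
            have h := hg ω.1.1 ω.1.2
            rw [ω.2.1, ω.2.2] at h
            exact h
          refine Nat.card_le_card_of_injective
            (fun ω => ⟨ω.1.2, by rw [hfix ω]; exact ω.2.2⟩) ?_
          intro x y hxy
          have h2 : x.1.2 = y.1.2 := congrArg Subtype.val hxy
          have h1 : x.1.1 = y.1.1 := by rw [← hfix x, ← hfix y]
          exact Subtype.ext (Prod.ext h1 h2)
      _ = ∑ b : Fin L → ZMod p, Nat.card {z : (Fin LZ → ZMod p) // φ u a z = b} :=
          Finset.sum_congr rfl fun b _ => hcu (g a b) a b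
      _ = Nat.card (Fin LZ → ZMod p) := (cds_card_fiber_sum (fun z : (Fin LZ → ZMod p) => φ u a z)).symm
      _ = p ^ LZ := hncardZ
  -- (Fin L → ZMod p)ep 3: total count, forcing equality everywhere
  have htot : ∑ a : Fin L → ZMod p, Nat.card {ω : (Fin L → ZMod p) × (Fin LZ → ZMod p) // φ v ω.1 ω.2 = a} =
      ∑ _a : Fin L → ZMod p, p ^ LZ := by
    rw [← cds_card_fiber_sum (fun ω : (Fin L → ZMod p) × (Fin LZ → ZMod p) => φ v ω.1 ω.2)]
    simp [Nat.card_eq_fintype_card, hcardS, hcardZ, Finset.sum_const, Finset.card_univ,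
      Fintype.card_fun, ZMod.card]
  have key : ∀ a : Fin L → ZMod p,
      Nat.card {ω : (Fin L → ZMod p) × (Fin LZ → ZMod p) // φ v ω.1 ω.2 = a} = p ^ LZ := by
    intro a
    exact (Finset.sum_eq_sum_iff_of_le fun a _ => hub a).mp htot a (Finset.mem_univ a)
  -- (Fin L → ZMod p)ep 4: each fiber of `φ v s ·` has size `p ^ LZ / p ^ L`
  have key2 : ∀ (s : (Fin L → ZMod p)) (a : Fin L → ZMod p),
      p ^ L * Nat.card {z : (Fin LZ → ZMod p) // φ v s z = a} = p ^ LZ := by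
    intro s a
    have h1 : ∑ s' : (Fin L → ZMod p), Nat.card {z : (Fin LZ → ZMod p) // φ v s' z = a} = p ^ LZ := by
      rw [← hdecomp a]; exact key a
    calc p ^ L * Nat.card {z : (Fin LZ → ZMod p) // φ v s z = a}
        = ∑ _s' : (Fin L → ZMod p), Nat.card {z : (Fin LZ → ZMod p) // φ v s z = a} := by
          rw [Finset.sum_const, Finset.card_univ, hcardS, smul_eq_mul]
      _ = ∑ s' : (Fin L → ZMod p), Nat.card {z : (Fin LZ → ZMod p) // φ v s' z = a} :=
          Finset.sum_congr rfl fun s' _ => hcv s s' a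
      _ = p ^ LZ := h1
  -- real versions
  have hpR : (0 : ℝ) < (p : ℝ) := by exact_mod_cast hp.pos
  have hΩ : (Fintype.card ((Fin L → ZMod p) × (Fin LZ → ZMod p)) : ℝ) = (p : ℝ) ^ L * (p : ℝ) ^ LZ := by
    rw [Fintype.card_prod, hcardS, hcardZ]; push_cast; ring
  -- the signal is uniform
  have prb1 : ∀ a : Fin L → ZMod p,
      prb (fun ω : (Fin L → ZMod p) × (Fin LZ → ZMod p) => φ v ω.1 ω.2) a = ((p : ℝ) ^ L)⁻¹ := by
    intro a
    have hk : (Nat.card {ω : (Fin L → ZMod p) × (Fin LZ → ZMod p) // φ v ω.1 ω.2 = a} : ℝ) = (p : ℝ) ^ LZ := by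
      exact_mod_cast congrArg (Nat.cast : ℕ → ℝ) (key a)
    rw [prb, hk, hΩ]
    field_simp
  -- the secret is uniform
  have prbS : ∀ s : (Fin L → ZMod p), prb (fun ω : (Fin L → ZMod p) × (Fin LZ → ZMod p) => ω.1) s = ((p : ℝ) ^ L)⁻¹ := by
    intro s
    have hk : Nat.card {ω : (Fin L → ZMod p) × (Fin LZ → ZMod p) // ω.1 = s} = p ^ LZ := by
      rw [← hncardZ]
      exact Nat.card_congr ⟨fun ω => ω.1.2, fun z => ⟨(s, z), rfl⟩,
        by rintro ⟨⟨s', z⟩, rfl⟩; rfl, fun z => rfl⟩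
    rw [prb, hk, hΩ]
    push_cast
    field_simp
  -- the pair (signal, secret) is uniform
  have prbVS : ∀ x : (Fin L → ZMod p) × (Fin L → ZMod p),
      prb (fun ω : (Fin L → ZMod p) × (Fin LZ → ZMod p) => (φ v ω.1 ω.2, ω.1)) x = ((p : ℝ) ^ (L + L))⁻¹ := by
    rintro ⟨a, s⟩
    have hiff : ∀ ω : (Fin L → ZMod p) × (Fin LZ → ZMod p),
        ((φ v ω.1 ω.2, ω.1) = (a, s)) ↔ (φ v ω.1 ω.2 = a ∧ ω.1 = s) := by
      intro ω; constructor
      · intro h; exact ⟨congrArg Prod.fst h, congrArg Prod.snd h⟩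
      · rintro ⟨h1, h2⟩; rw [h1, h2]
    have hk : Nat.card {ω : (Fin L → ZMod p) × (Fin LZ → ZMod p) // (φ v ω.1 ω.2, ω.1) = (a, s)} =
        Nat.card {z : (Fin LZ → ZMod p) // φ v s z = a} := by
      rw [Nat.card_congr (Equiv.subtypeEquivRight hiff)]
      exact heqv s a
    have hk2 : (p : ℝ) ^ L * (Nat.card {z : (Fin LZ → ZMod p) // φ v s z = a} : ℝ) = (p : ℝ) ^ LZ := by
      exact_mod_cast congrArg (Nat.cast : ℕ → ℝ) (key2 s a)
    rw [prb, hk, hΩ]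
    rw [pow_add]
    rw [div_eq_iff (by positivity), eq_comm, inv_mul_eq_div, div_eq_iff (by positivity)]
    calc (p:ℝ) ^ L * (p:ℝ) ^ LZ
        = ((p:ℝ) ^ L * (Nat.card {z : (Fin LZ → ZMod p) // φ v s z = a} : ℝ)) * (p:ℝ) ^ L := by
          rw [hk2]; ring
      _ = (Nat.card {z : (Fin LZ → ZMod p) // φ v s z = a} : ℝ) * ((p:ℝ) ^ L * (p:ℝ) ^ L) := by ring
  -- conclude via the uniform-entropy lemma
  have e1 : entp p (fun ω : (Fin L → ZMod p) × (Fin LZ → ZMod p) => φ v ω.1 ω.2) = (L : ℝ) :=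
    cds_entp_uniform p L hp.one_lt _ hcardS prb1
  have e2 : entp p (fun ω : (Fin L → ZMod p) × (Fin LZ → ZMod p) => ω.1) = (L : ℝ) :=
    cds_entp_uniform p L hp.one_lt _ hcardS prbS
  have e3 : entp p (fun ω : (Fin L → ZMod p) × (Fin LZ → ZMod p) => (φ v ω.1 ω.2, ω.1)) = ((L + L : ℕ) : ℝ) := by
    refine cds_entp_uniform p (L + L) hp.one_lt _ ?_ prbVS
    rw [Fintype.card_prod, hcardS, pow_add]
  refine ⟨e1, ?_⟩
  rw [e2, e3]
  push_cast
  ring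
end

section
/- (Noise Alignment for Qualified Edge) Let G be a non-degenerate CDS instance and consider a CDS scheme for G over F_p with parameters (L, L_Z, N) where N = L (rate 1/2). Then for every qualified edge {v,u}, the conditional entropy of the pair of signals given the secret satisfies H(v, u | S) = L in p-ary units. -/
open scoped BigOperators

/-- Sum of fiber cardinalities equals the cardinality of the domain. -/
lemma sum_card_fiber {Ω α : Type*} [Fintype Ω] [Fintype α] (f : Ω → α) :
    ∑ a : α, Nat.card {ω : Ω // f ω = a} = Fintype.card Ω := by
  classical
  calc ∑ a : α, Nat.card {ω : Ω // f ω = a}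
      = ∑ a : α, Fintype.card {ω : Ω // f ω = a} := by
        refine Finset.sum_congr rfl fun a _ => Nat.card_eq_fintype_card
    _ = Fintype.card ((a : α) × {ω : Ω // f ω = a}) := Fintype.card_sigma.symm
    _ = Fintype.card Ω := Fintype.card_congr (Equiv.sigmaFiberEquiv f)

/-- Partitioning a subtype count by the value of an auxiliary function. -/
lemma card_partition {Ω α : Type*} [Fintype Ω] [Fintype α] (P : Ω → Prop) (f : Ω → α) :
    Nat.card {ω : Ω // P ω} = ∑ a : α, Nat.card {ω : Ω // P ω ∧ f ω = a} := by
  classical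
  have h := sum_card_fiber (fun x : {ω : Ω // P ω} => f x.1)
  rw [← Nat.card_eq_fintype_card] at h
  rw [← h]
  refine Finset.sum_congr rfl fun a _ => ?_
  exact Nat.card_congr (Equiv.subtypeSubtypeEquivSubtypeInter P (fun ω => f ω = a))

/-- If every fiber of `X` has cardinality `0` or `|Ω| / p^k`, then `entp p X = k`. -/
lemma entp_eq_of_fibers {Ω α : Type*} [Fintype Ω] [Fintype α] {p : ℕ} (hp : 1 < p) (k : ℕ)
    (X : Ω → α) (hΩ : Fintype.card Ω ≠ 0)
    (h : ∀ a, Nat.card {ω : Ω // X ω = a} = 0 ∨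
      (Nat.card {ω : Ω // X ω = a} : ℝ) = (Fintype.card Ω : ℝ) * ((p : ℝ) ^ k)⁻¹) :
    entp p X = k := by
  classical
  have hp0 : (0:ℝ) < p := by exact_mod_cast Nat.lt_of_lt_of_le Nat.zero_lt_one hp.le
  have hpne1 : (p:ℝ) ≠ 1 := by exact_mod_cast hp.ne'
  set q : ℝ := ((p:ℝ) ^ k)⁻¹ with hq_def
  have hq0 : 0 < q := by positivity
  have hcΩ : (0:ℝ) < Fintype.card Ω := by
    exact_mod_cast Nat.pos_of_ne_zero hΩ
  have hprb : ∀ a, prb X a = 0 ∨ prb X a = q := by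
    intro a
    rcases h a with h' | h'
    · left; rw [prb, h']; simp
    · right
      rw [prb, h', mul_comm, mul_div_assoc, div_self hcΩ.ne', mul_one]
  have hlogq : Real.logb p q = -(k:ℝ) := by
    have hq' : q = (p:ℝ) ^ (-(k:ℝ)) := by
      rw [Real.rpow_neg hp0.le, Real.rpow_natCast]
    rw [hq', Real.logb_rpow hp0 hpne1]
  set T := Finset.univ.filter (fun a : α => prb X a ≠ 0) with hT
  have hmemT : ∀ a, a ∈ T ↔ prb X a ≠ 0 := by
    intro a; simp [hT]
  have hterm0 : ∀ a ∈ Finset.univ, a ∉ T → -(prb X a * Real.logb p (prb X a)) = 0 := by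
    intro a _ ha
    have : prb X a = 0 := by
      by_contra h0; exact ha ((hmemT a).mpr h0)
    simp [this]
  have htermT : ∀ a ∈ T, -(prb X a * Real.logb p (prb X a)) = q * k := by
    intro a ha
    have : prb X a = q := (hprb a).resolve_left ((hmemT a).mp ha)
    rw [this, hlogq]; ring
  have hsum1 : ∑ a : α, prb X a = 1 := by
    have h2 := sum_card_fiber X
    have h3 : ∑ a : α, prb X a = (∑ a : α, (Nat.card {ω : Ω // X ω = a} : ℝ)) / Fintype.card Ω := by
      rw [Finset.sum_div]; rfl
    rw [h3, ← Nat.cast_sum, h2, div_self hcΩ.ne']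
  have hTcard : (T.card : ℝ) * q = 1 := by
    have h4 : ∑ a : α, prb X a = ∑ a ∈ T, prb X a := by
      refine (Finset.sum_subset (Finset.subset_univ T) ?_).symm
      intro a ha hna
      by_contra h0; exact hna ((hmemT a).mpr h0)
    have h5 : ∑ a ∈ T, prb X a = ∑ a ∈ T, q :=
      Finset.sum_congr rfl fun a ha => (hprb a).resolve_left ((hmemT a).mp ha)
    rw [← hsum1, h4, h5, Finset.sum_const, nsmul_eq_mul]
  have h6 : entp p X = ∑ a ∈ T, (q * (k:ℝ)) := by
    rw [entp]
    exact ((Finset.sum_subset (Finset.subset_univ T) hterm0).symm).trans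
      (Finset.sum_congr rfl htermT)
  rw [h6, Finset.sum_const, nsmul_eq_mul, ← mul_assoc, hTcard, one_mul]

/-- Combinatorial core: counts of joint fibers for a qualified edge. -/
lemma cds_core {σ ζ : Type*} [Fintype σ] [Fintype ζ] [DecidableEq σ]
    (F G : σ → ζ → σ) (g : σ → σ → σ) (hg : ∀ s z, g (F s z) (G s z) = s)
    (hmvI : ∀ s s' a, Nat.card {z : ζ // F s z = a} = Nat.card {z : ζ // F s' z = a})
    (hmuI : ∀ s s' b, Nat.card {z : ζ // G s z = b} = Nat.card {z : ζ // G s' z = b})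
    (s₀ : σ) :
    ∃ M : ℕ, Fintype.card σ * M = Fintype.card ζ ∧
      ∀ s a b, Nat.card {z : ζ // F s z = a ∧ G s z = b} =
        if s = g a b then M else 0 := by
  classical
  set c : σ → σ → σ → ℕ := fun s a b => Nat.card {z : ζ // F s z = a ∧ G s z = b} with hc_def
  set mv : σ → σ → ℕ := fun s a => Nat.card {z : ζ // F s z = a} with hmv_def
  set mu : σ → σ → ℕ := fun s b => Nat.card {z : ζ // G s z = b} with hmu_def
  have hrow : ∀ s a, ∑ b : σ, c s a b = mv s a :=
    fun s a => (card_partition (fun z => F s z = a) (G s)).symm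
  have hcol : ∀ s b, ∑ a : σ, c s a b = mu s b := by
    intro s b
    have h1 : ∀ a : σ, c s a b = Nat.card {z : ζ // G s z = b ∧ F s z = a} :=
      fun a => Nat.card_congr (Equiv.subtypeEquivRight (fun z => and_comm))
    calc ∑ a : σ, c s a b = ∑ a : σ, Nat.card {z : ζ // G s z = b ∧ F s z = a} :=
          Finset.sum_congr rfl fun a _ => h1 a
      _ = mu s b := (card_partition (fun z => G s z = b) (F s)).symm
  have hczero : ∀ s a b, s ≠ g a b → c s a b = 0 := by
    intro s a b hs
    by_contra h0
    obtain ⟨⟨⟨z, hz1, hz2⟩⟩, -⟩ := Nat.card_ne_zero.mp h0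
    exact hs (by rw [← hg s z, hz1, hz2])
  have hsum_s : ∀ a b, ∑ s : σ, c s a b = c (g a b) a b := by
    intro a b
    exact Finset.sum_eq_single _ (fun s _ hs => hczero s a b hs)
      (fun h => absurd (Finset.mem_univ _) h)
  have hc_le_mv : ∀ s a b, c s a b ≤ mv s a := by
    intro s a b
    refine Nat.card_le_card_of_injective
      (fun x : {z : ζ // F s z = a ∧ G s z = b} => (⟨x.1, x.2.1⟩ : {z : ζ // F s z = a})) ?_
    intro x y hxy
    simp only [Subtype.mk.injEq] at hxy
    exact Subtype.ext hxy
  have hc_le_mu : ∀ s a b, c s a b ≤ mu s b := by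
    intro s a b
    refine Nat.card_le_card_of_injective
      (fun x : {z : ζ // F s z = a ∧ G s z = b} => (⟨x.1, x.2.2⟩ : {z : ζ // G s z = b})) ?_
    intro x y hxy
    simp only [Subtype.mk.injEq] at hxy
    exact Subtype.ext hxy
  have hrowforce : ∀ a b, c (g a b) a b = mv s₀ a := by
    intro a
    have hsum : ∑ b : σ, c (g a b) a b = ∑ _b : σ, mv s₀ a := by
      calc ∑ b : σ, c (g a b) a b = ∑ b : σ, ∑ s : σ, c s a b :=
            Finset.sum_congr rfl fun b _ => (hsum_s a b).symm
        _ = ∑ s : σ, ∑ b : σ, c s a b := Finset.sum_comm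
        _ = ∑ _s : σ, mv s₀ a :=
            Finset.sum_congr rfl fun s _ => (hrow s a).trans (hmvI s s₀ a)
    intro b
    exact (Finset.sum_eq_sum_iff_of_le
      (fun b _ => (hc_le_mv (g a b) a b).trans_eq (hmvI (g a b) s₀ a))).mp hsum b
      (Finset.mem_univ b)
  have hcolforce : ∀ b a, c (g a b) a b = mu s₀ b := by
    intro b
    have hsum : ∑ a : σ, c (g a b) a b = ∑ _a : σ, mu s₀ b := by
      calc ∑ a : σ, c (g a b) a b = ∑ a : σ, ∑ s : σ, c s a b :=
            Finset.sum_congr rfl fun a _ => (hsum_s a b).symm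
        _ = ∑ s : σ, ∑ a : σ, c s a b := Finset.sum_comm
        _ = ∑ _s : σ, mu s₀ b :=
            Finset.sum_congr rfl fun s _ => (hcol s b).trans (hmuI s s₀ b)
    intro a
    exact (Finset.sum_eq_sum_iff_of_le
      (fun a _ => (hc_le_mu (g a b) a b).trans_eq (hmuI (g a b) s₀ b))).mp hsum a
      (Finset.mem_univ a)
  have hMv : ∀ a, mv s₀ a = mv s₀ s₀ := by
    intro a
    have h1 : mv s₀ a = mu s₀ s₀ := (hrowforce a s₀).symm.trans (hcolforce s₀ a)
    have h2 : mv s₀ s₀ = mu s₀ s₀ := (hrowforce s₀ s₀).symm.trans (hcolforce s₀ s₀)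
    rw [h1, h2]
  refine ⟨mv s₀ s₀, ?_, ?_⟩
  · have h3 : ∑ a : σ, mv s₀ a = Fintype.card ζ := by
      rw [← sum_card_fiber (F s₀)]
    rw [← h3]
    rw [Finset.sum_congr rfl fun a _ => hMv a, Finset.sum_const, Finset.card_univ,
      smul_eq_mul]
  · intro s a b
    by_cases hs : s = g a b
    · rw [if_pos hs, hs]
      exact (hrowforce a b).trans (hMv a)
    · rw [if_neg hs]; exact hczero s a b hs

/-- Fiber of the joint map `(signals, secret)` over `((a,b),s)`. -/
lemma fiber_joint {σ ζ : Type*} (F G : σ → ζ → σ) (a b s : σ) :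
    Nat.card {ω : σ × ζ // ((F ω.1 ω.2, G ω.1 ω.2), ω.1) = ((a, b), s)} =
    Nat.card {z : ζ // F s z = a ∧ G s z = b} := by
  apply Nat.card_congr
  refine ⟨fun x => ⟨x.1.2, ?_⟩, fun z => ⟨(s, z.1), by simp [z.2.1, z.2.2]⟩, ?_, ?_⟩
  · have h := x.2
    simp only [Prod.mk.injEq] at h
    obtain ⟨⟨h1, h2⟩, h3⟩ := h
    rw [h3] at h1 h2
    exact ⟨h1, h2⟩
  · intro x
    have h := x.2
    simp only [Prod.mk.injEq] at h
    apply Subtype.ext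
    show (s, (x.1).2) = x.1
    rw [← Prod.mk.eta (p := (x.1 : _ × _)), h.2]
  · intro z; rfl

/-- Fiber of the first projection. -/
lemma fiber_fst {σ ζ : Type*} (s : σ) :
    Nat.card {ω : σ × ζ // ω.1 = s} = Nat.card ζ := by
  apply Nat.card_congr
  refine ⟨fun x => x.1.2, fun z => ⟨(s, z), rfl⟩, ?_, fun z => rfl⟩
  intro x
  apply Subtype.ext
  show (s, (x.1).2) = x.1
  rw [← Prod.mk.eta (p := (x.1 : _ × _)), x.2]

/-- Noise Alignment for Qualified Edge: For a non-degenerate CDS instance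
`(Q, U)` and a CDS scheme over `F_p` with `N = L` (rate `1/2`), every qualified edge
`{v,u}` satisfies `H(v, u | S) = L` in `p`-ary units, where the sample space is the
secret–noise pair `(S, Z)` uniform on `F_p^L × F_p^{L_Z}` and
`H(v, u | S) = H(v, u, S) − H(S)`. -/
theorem cds_noise_alignment_qualified_edge {V : Type*} [Fintype V] (Q U : SimpleGraph V)
    (p L LZ : ℕ) (hp : p.Prime) [NeZero p]
    (hdisj : ∀ v u : V, ¬ (Q.Adj v u ∧ U.Adj v u))
    (hnd : ∀ v : V, ∃ u : V, U.Adj v u)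
    (φ : V → (Fin L → ZMod p) → (Fin LZ → ZMod p) → (Fin L → ZMod p))
    (hcorr : CDSCorrect Q φ) (hsec : CDSSecure U φ)
    (v u : V) (hvu : Q.Adj v u) :
    entp p (fun ω : (Fin L → ZMod p) × (Fin LZ → ZMod p) =>
        ((φ v ω.1 ω.2, φ u ω.1 ω.2), ω.1)) -
      entp p (fun ω : (Fin L → ZMod p) × (Fin LZ → ZMod p) => ω.1) = L := by
  classical
  obtain ⟨g, hg⟩ := hcorr v u hvu
  obtain ⟨w, hw⟩ := hnd v
  obtain ⟨w', hw'⟩ := hnd u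
  have hp1 : 1 < p := hp.one_lt
  have hp0 : (0:ℝ) < p := by exact_mod_cast hp.pos
  have cardσ : Fintype.card (Fin L → ZMod p) = p ^ L := by
    simp [Fintype.card_fun, ZMod.card]
  have cardζ : Fintype.card (Fin LZ → ZMod p) = p ^ LZ := by
    simp [Fintype.card_fun, ZMod.card]
  have cardΩ : Fintype.card ((Fin L → ZMod p) × (Fin LZ → ZMod p)) = p ^ L * p ^ LZ := by
    simp [Fintype.card_prod, Fintype.card_fun, ZMod.card]
  have hΩne : Fintype.card ((Fin L → ZMod p) × (Fin LZ → ZMod p)) ≠ 0 := by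
    rw [cardΩ]; positivity
  -- marginals independent of the secret, via security on unqualified edges
  have hmvI : ∀ s s' a, Nat.card {z : Fin LZ → ZMod p // φ v s z = a} =
      Nat.card {z : Fin LZ → ZMod p // φ v s' z = a} := by
    intro s s' a
    calc Nat.card {z : Fin LZ → ZMod p // φ v s z = a}
        = ∑ x : Fin L → ZMod p, Nat.card {z : Fin LZ → ZMod p // φ v s z = a ∧ φ w s z = x} :=
          card_partition _ _
      _ = ∑ x : Fin L → ZMod p, Nat.card {z : Fin LZ → ZMod p // φ v s' z = a ∧ φ w s' z = x} :=
          Finset.sum_congr rfl fun x _ => hsec v w hw s s' a x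
      _ = Nat.card {z : Fin LZ → ZMod p // φ v s' z = a} := (card_partition _ _).symm
  have hmuI : ∀ s s' b, Nat.card {z : Fin LZ → ZMod p // φ u s z = b} =
      Nat.card {z : Fin LZ → ZMod p // φ u s' z = b} := by
    intro s s' b
    calc Nat.card {z : Fin LZ → ZMod p // φ u s z = b}
        = ∑ x : Fin L → ZMod p, Nat.card {z : Fin LZ → ZMod p // φ u s z = b ∧ φ w' s z = x} :=
          card_partition _ _
      _ = ∑ x : Fin L → ZMod p, Nat.card {z : Fin LZ → ZMod p // φ u s' z = b ∧ φ w' s' z = x} :=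
          Finset.sum_congr rfl fun x _ => hsec u w' hw' s s' b x
      _ = Nat.card {z : Fin LZ → ZMod p // φ u s' z = b} := (card_partition _ _).symm
  obtain ⟨M, hMcard, hc⟩ := cds_core (fun s z => φ v s z) (fun s z => φ u s z) g hg
    hmvI hmuI (fun _ => 0)
  rw [cardσ, cardζ] at hMcard
  have hMreal : (M : ℝ) * (p:ℝ) ^ L = (p:ℝ) ^ LZ := by
    have := congrArg (fun n : ℕ => (n : ℝ)) hMcard
    push_cast at this
    linarith [this]
  -- entropy of the joint (signals, secret)
  have hH1 : entp p (fun ω : (Fin L → ZMod p) × (Fin LZ → ZMod p) =>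
      ((φ v ω.1 ω.2, φ u ω.1 ω.2), ω.1)) = ((L + L : ℕ) : ℝ) := by
    apply entp_eq_of_fibers hp1 (L + L) _ hΩne
    rintro ⟨⟨a, b⟩, s⟩
    have hfib : Nat.card {ω : (Fin L → ZMod p) × (Fin LZ → ZMod p) //
        ((φ v ω.1 ω.2, φ u ω.1 ω.2), ω.1) = ((a, b), s)} =
        Nat.card {z : Fin LZ → ZMod p // φ v s z = a ∧ φ u s z = b} :=
      fiber_joint (fun s z => φ v s z) (fun s z => φ u s z) a b s
    rw [hfib, hc s a b]
    by_cases hs : s = g a b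
    · rw [if_pos hs]
      right
      rw [cardΩ]
      push_cast
      rw [pow_add]
      field_simp
      nlinarith [hMreal, pow_pos hp0 L, pow_pos hp0 LZ]
    · rw [if_neg hs]; left; rfl
  -- entropy of the secret
  have hH2 : entp p (fun ω : (Fin L → ZMod p) × (Fin LZ → ZMod p) => ω.1) = ((L : ℕ) : ℝ) := by
    apply entp_eq_of_fibers hp1 L _ hΩne
    intro s
    right
    have hfib : Nat.card {ω : (Fin L → ZMod p) × (Fin LZ → ZMod p) // ω.1 = s} =
        Nat.card (Fin LZ → ZMod p) := fiber_fst s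
    rw [hfib, Nat.card_eq_fintype_card, cardζ, cardΩ]
    push_cast
    field_simp
  rw [hH1, hH2]
  push_cast
  ring
end

section
/- (Noise Alignment for Qualified Component) Let G be a non-degenerate CDS instance and consider a CDS scheme for G over F_p with parameters (L, L_Z, N) where N = L (rate 1/2). Then for every qualified component Q of G containing at least two vertices, with vertex set V_Q, and for every nonempty subset V_q ⊆ V_Q, the conditional entropy of the tuple of signals of the vertices in V_q given the secret satisfies H(V_q | S) = H(V_Q | S) = L in p-ary units. -/
/-!
Security on the unqualified edge that non-degeneracy provides at a vertex `v` makes the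
distribution of `v`'s signal the same for every secret. On a qualified edge `{v, u}` the decoder
`dec` then maps, for each value `a` of `v`'s signal, the possible values of `u`'s signal onto all
secrets; as both live in `F_p^L`, `b ↦ dec a b` is a bijection. Hence, given `S`, `u`'s signal is
a function of `v`'s, and summing fibres shows that it is uniform on `F_p^L`. Along qualified paths
every signal of the component is then a function of the signal of one vertex `v₀` of `V_q` given
`S`, so the signals of `V_q` have, given `S`, the same fibres as the uniform signal of `v₀`.
-/

open scoped BigOperators

section FiberCounting

variable {Ω α : Type*} [Fintype Ω]

theorem sum_natCard_fiber [Fintype α] (X : Ω → α) :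
    ∑ a, Nat.card {ω // X ω = a} = Fintype.card Ω := by
  classical
  simp only [Nat.card_eq_fintype_card]
  rw [← Fintype.card_sigma, Fintype.card_congr (Equiv.sigmaFiberEquiv X)]

theorem natCard_eq_sum_natCard_and [Fintype α] (P : Ω → Prop) (X : Ω → α) :
    Nat.card {ω // P ω} = ∑ a, Nat.card {ω // P ω ∧ X ω = a} := by
  classical
  rw [Nat.card_eq_fintype_card, ← sum_natCard_fiber fun ω : {ω // P ω} => X ω]
  exact Finset.sum_congr rfl fun a _ =>
    Nat.card_congr (Equiv.subtypeSubtypeEquivSubtypeInter P fun ω => X ω = a)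

theorem sum_prb [Nonempty Ω] [Fintype α] (X : Ω → α) : ∑ a, prb X a = 1 := by
  simp only [prb, ← Finset.sum_div, ← Nat.cast_sum, sum_natCard_fiber]
  exact div_self (Nat.cast_ne_zero.2 Fintype.card_ne_zero)

theorem entp_eq_logb_of_natCard_fiber [Nonempty Ω] [Fintype α] {p : ℕ} (X : Ω → α) (k : ℕ)
    (hX : ∀ a, Nat.card {ω // X ω = a} = 0 ∨
      k * Nat.card {ω // X ω = a} = Fintype.card Ω) :
    entp p X = Real.logb p k := by
  have hterm : ∀ a, -(prb X a * Real.logb p (prb X a)) = prb X a * Real.logb p k := by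
    intro a
    rcases Nat.eq_zero_or_pos (Nat.card {ω // X ω = a}) with h | h
    · simp [prb, h]
    · have hprb : prb X a = (k : ℝ)⁻¹ := by
        rw [prb, ← (hX a).resolve_left h.ne', Nat.cast_mul]
        exact div_mul_cancel_right₀ (by exact_mod_cast h.ne') _
      rw [hprb, Real.logb_inv]
      ring
  rw [entp, Finset.sum_congr rfl fun a _ => hterm a, ← Finset.sum_mul, sum_prb, one_mul]

end FiberCounting

section SecretAndNoise

variable {S Z α : Type*}

theorem natCard_fst_eq_and (s : S) (P : S → Z → Prop) :
    Nat.card {ω : S × Z // ω.1 = s ∧ P ω.1 ω.2} = Nat.card {z // P s z} :=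
  Nat.card_congr
    { toFun := fun ⟨⟨_, z⟩, hs, hP⟩ => ⟨z, hs ▸ hP⟩
      invFun := fun z => ⟨(s, z.1), rfl, z.2⟩
      left_inv := by rintro ⟨⟨_, _⟩, rfl, _⟩; rfl
      right_inv := fun _ => rfl }

theorem entp_pair_sub_entp_fst [Fintype S] [Fintype Z] [Nonempty S] [Nonempty Z] [Fintype α]
    {p : ℕ} (G : S → Z → α) (k : ℕ)
    (hG : ∀ s t, Nat.card {z // G s z = t} = 0 ∨
      k * Nat.card {z // G s z = t} = Fintype.card Z) :
    entp p (fun ω : S × Z => (G ω.1 ω.2, ω.1)) - entp p (fun ω : S × Z => ω.1) =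
      Real.logb p k := by
  have hpair : ∀ t s, Nat.card {ω : S × Z // (G ω.1 ω.2, ω.1) = (t, s)} =
      Nat.card {z // G s z = t} := fun t s => by
    rw [← natCard_fst_eq_and s fun s z => G s z = t]
    exact Nat.card_congr (Equiv.subtypeEquivRight fun ω => by rw [Prod.ext_iff, and_comm])
  have hfst : ∀ s, Nat.card {ω : S × Z // ω.1 = s} = Fintype.card Z := fun s => by
    simpa [Nat.card_eq_fintype_card] using natCard_fst_eq_and (Z := Z) s fun _ _ => True
  have hk : k ≠ 0 := by
    obtain ⟨s⟩ := ‹Nonempty S›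
    obtain ⟨z⟩ := ‹Nonempty Z›
    have hne : Nat.card {z' // G s z' = G s z} ≠ 0 :=
      Nat.card_ne_zero.2 ⟨⟨⟨z, rfl⟩⟩, inferInstance⟩
    exact left_ne_zero_of_mul ((hG s (G s z)).resolve_left hne ▸ Fintype.card_ne_zero)
  rw [entp_eq_logb_of_natCard_fiber _ (Fintype.card S * k),
    entp_eq_logb_of_natCard_fiber _ (Fintype.card S), Nat.cast_mul,
    Real.logb_mul (by exact_mod_cast Fintype.card_ne_zero) (by exact_mod_cast hk),
    add_sub_cancel_left]
  · exact fun s => Or.inr (by rw [hfst, Fintype.card_prod])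
  · rintro ⟨t, s⟩
    rw [hpair, mul_assoc, Fintype.card_prod]
    exact (hG s t).imp_right (congrArg _)

theorem natCard_fiber_pi_eq_zero_or {ι : Type*} (F : ι → Z → α) (i₀ : ι)
    (hF : ∀ i z z', F i₀ z = F i₀ z' → F i z = F i z') (t : ι → α) :
    Nat.card {z // (fun i => F i z) = t} = 0 ∨
      Nat.card {z // (fun i => F i z) = t} = Nat.card {z // F i₀ z = t i₀} := by
  by_cases h : ∃ z₀, (fun i => F i z₀) = t
  · obtain ⟨z₀, rfl⟩ := h
    refine Or.inr (Nat.card_congr (Equiv.subtypeEquivRight fun z => ?_))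
    exact ⟨fun hz => congrFun hz i₀, fun hz => funext fun i => hF i z z₀ hz⟩
  · push Not at h
    exact Or.inl (Nat.card_eq_zero.2 (.inl ⟨fun z => h z.1 z.2⟩))

theorem entp_pi_sub_entp_fst {ι : Type*} [Fintype S] [Fintype Z] [Nonempty S] [Nonempty Z]
    [Fintype ι] [DecidableEq ι] [Fintype α] {p : ℕ} (F : ι → S → Z → α) (i₀ : ι)
    (hF : ∀ i s z z', F i₀ s z = F i₀ s z' → F i s z = F i s z')
    (huniform : ∀ s a, Fintype.card S * Nat.card {z // F i₀ s z = a} = Fintype.card Z) :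
    entp p (fun ω : S × Z => ((fun i => F i ω.1 ω.2), ω.1)) -
      entp p (fun ω : S × Z => ω.1) = Real.logb p (Fintype.card S) := by
  refine entp_pair_sub_entp_fst (fun s z i => F i s z) _ fun s t => ?_
  rw [← huniform s (t i₀)]
  exact (natCard_fiber_pi_eq_zero_or _ i₀ (fun i => hF i s) t).imp_right (congrArg _)

end SecretAndNoise

section Decoding

variable {S Z A B : Type*} {f : S → Z → A} {g : S → Z → B} {dec : A → B → S}

theorem decode_eq_iff [Finite B] (hcard : Nat.card B ≤ Nat.card S)
    (hf : ∀ s s', Set.range (f s) ⊆ Set.range (f s'))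
    (hdec : ∀ s z, dec (f s z) (g s z) = s) {s : S} {z : Z} {b : B} :
    dec (f s z) b = s ↔ g s z = b := by
  have hbij : (dec (f s z)).Bijective := by
    refine Function.Surjective.bijective_of_nat_card_le (fun s' => ?_) hcard
    obtain ⟨z', hz'⟩ := hf s s' ⟨z, rfl⟩
    exact ⟨g s' z', by rw [← hz', hdec]⟩
  refine ⟨fun h => hbij.1 ?_, fun h => h ▸ hdec s z⟩
  rw [h, hdec]

theorem eq_of_decode [Finite B] (hcard : Nat.card B ≤ Nat.card S)
    (hf : ∀ s s', Set.range (f s) ⊆ Set.range (f s'))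
    (hdec : ∀ s z, dec (f s z) (g s z) = s) {s : S} {z z' : Z} (h : f s z = f s z') :
    g s z = g s z' :=
  (decode_eq_iff hcard hf hdec).1 (by rw [h, hdec])

theorem range_subset_of_natCard_fiber_eq [Finite Z]
    (hf : ∀ s s' a, Nat.card {z // f s z = a} = Nat.card {z // f s' z = a}) (s s' : S) :
    Set.range (f s) ⊆ Set.range (f s') := by
  rintro _ ⟨z, rfl⟩
  have hne : Nat.card {z' // f s' z' = f s z} ≠ 0 := by
    rw [← hf s s']
    exact Nat.card_ne_zero.2 ⟨⟨⟨z, rfl⟩⟩, inferInstance⟩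
  obtain ⟨⟨z', hz'⟩⟩ := (Nat.card_ne_zero.1 hne).1
  exact ⟨z', hz'⟩

theorem natCard_fiber_eq_of_natCard_fiber_and_eq [Fintype Z] [Fintype B]
    (h : ∀ s s' a b, Nat.card {z // f s z = a ∧ g s z = b} =
      Nat.card {z // f s' z = a ∧ g s' z = b}) (s s' : S) (a : A) :
    Nat.card {z // f s z = a} = Nat.card {z // f s' z = a} := by
  rw [natCard_eq_sum_natCard_and _ (g s), natCard_eq_sum_natCard_and _ (g s')]
  exact Finset.sum_congr rfl fun b _ => h s s' a b

theorem card_mul_natCard_fiber_eq [Fintype S] [Fintype Z] [Fintype A] [Finite B]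
    (hcard : Nat.card B ≤ Nat.card S)
    (hf : ∀ s s' a, Nat.card {z // f s z = a} = Nat.card {z // f s' z = a})
    (hg : ∀ s s' b, Nat.card {z // g s z = b} = Nat.card {z // g s' z = b})
    (hdec : ∀ s z, dec (f s z) (g s z) = s) (s : S) (b : B) :
    Fintype.card S * Nat.card {z // g s z = b} = Fintype.card Z := by
  classical
  have hjoint : ∀ s' a, Nat.card {z // g s' z = b ∧ f s' z = a} =
      if dec a b = s' then Nat.card {z // f s z = a} else 0 := by
    intro s' a
    split_ifs with h
    · rw [hf s s' a]
      refine Nat.card_congr (Equiv.subtypeEquivRight fun z =>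
        ⟨And.right, fun hz => ⟨?_, hz⟩⟩)
      exact (decode_eq_iff hcard (range_subset_of_natCard_fiber_eq hf) hdec).1 (hz ▸ h)
    · refine Nat.card_eq_zero.2 (.inl ⟨fun ⟨z, hgz, hfz⟩ => h ?_⟩)
      rw [← hgz, ← hfz, hdec]
  calc Fintype.card S * Nat.card {z // g s z = b}
      = ∑ s', Nat.card {z // g s' z = b} := by
        rw [Finset.sum_congr rfl fun s' _ => hg s' s b, Finset.sum_const, Finset.card_univ,
          smul_eq_mul]
    _ = ∑ s', ∑ a, Nat.card {z // g s' z = b ∧ f s' z = a} :=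
        Finset.sum_congr rfl fun s' _ => natCard_eq_sum_natCard_and _ (f s')
    _ = ∑ a, Nat.card {z // f s z = a} := by
        rw [Finset.sum_comm]
        simp only [hjoint, Finset.sum_ite_eq, Finset.mem_univ, if_true]
    _ = Fintype.card Z := sum_natCard_fiber (f s)

end Decoding

theorem SimpleGraph.Reachable.induction_adj {V : Type*} {G : SimpleGraph V} {P : V → Prop}
    (hP : ∀ x y, G.Adj x y → P x → P y) {v w : V} (h : G.Reachable v w) (hv : P v) : P w := by
  rw [SimpleGraph.reachable_iff_reflTransGen] at h
  induction h with
  | refl => exact hv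
  | tail _ hxy ih => exact hP _ _ hxy ih

theorem SimpleGraph.ConnectedComponent.exists_adj_of_nontrivial {V : Type*} {G : SimpleGraph V}
    {C : G.ConnectedComponent} (hC : C.supp.Nontrivial) {v : V} (hv : v ∈ C.supp) :
    ∃ u, G.Adj v u := by
  obtain ⟨w, hw, hwv⟩ := hC.exists_ne v
  have hreach : G.Reachable v w := ConnectedComponent.exact (hv.trans hw.symm)
  exact Reachable.nonempty_neighborSet_left hwv.symm hreach

theorem CDSSecure.natCard_fiber_eq {V : Type*} {U : SimpleGraph V} {p L LZ N : ℕ} [NeZero p]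
    {φ : V → (Fin L → ZMod p) → (Fin LZ → ZMod p) → (Fin N → ZMod p)}
    (hsec : CDSSecure U φ)
    {v u : V} (hvu : U.Adj v u) (s s' : Fin L → ZMod p) (a : Fin N → ZMod p) :
    Nat.card {z // φ v s z = a} = Nat.card {z // φ v s' z = a} :=
  natCard_fiber_eq_of_natCard_fiber_and_eq (hsec v u hvu) s s' a

theorem CDSCorrect.eq_of_reachable_s6 {V : Type*} {Q : SimpleGraph V} {p L LZ : ℕ} [NeZero p]
    {φ : V → (Fin L → ZMod p) → (Fin LZ → ZMod p) → (Fin L → ZMod p)}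
    (hcorr : CDSCorrect Q φ)
    (hfiber : ∀ v s s' a, Nat.card {z // φ v s z = a} = Nat.card {z // φ v s' z = a})
    {v w : V} (hvw : Q.Reachable v w) {s : Fin L → ZMod p} {z z' : Fin LZ → ZMod p}
    (h : φ v s z = φ v s z') : φ w s z = φ w s z' := by
  refine hvw.induction_adj (P := fun x => φ x s z = φ x s z') (fun x y hxy hx => ?_) h
  obtain ⟨dec, hdec⟩ := hcorr x y hxy
  exact eq_of_decode le_rfl (range_subset_of_natCard_fiber_eq (hfiber x)) hdec hx

open Classical in
theorem cds_noise_alignment_qualified_component_general {V : Type*} [Fintype V] [DecidableEq V]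
    (Q U : SimpleGraph V)
    (p L LZ : ℕ) (hp : p.Prime) [NeZero p]
    (hnd : ∀ v : V, ∃ u : V, U.Adj v u)
    (φ : V → (Fin L → ZMod p) → (Fin LZ → ZMod p) → (Fin L → ZMod p))
    (hcorr : CDSCorrect Q φ) (hsec : CDSSecure U φ)
    (C : Q.ConnectedComponent)
    (hC : ∃ v u : V, v ≠ u ∧ Q.connectedComponentMk v = C ∧ Q.connectedComponentMk u = C)
    (Vq : Finset V) (hne : Vq.Nonempty)
    (hsub : ∀ v ∈ Vq, Q.connectedComponentMk v = C) :
    entp p (fun ω : (Fin L → ZMod p) × (Fin LZ → ZMod p) =>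
        ((fun x : {w : V // w ∈ Vq} => φ x.1 ω.1 ω.2), ω.1)) -
      entp p (fun ω : (Fin L → ZMod p) × (Fin LZ → ZMod p) => ω.1) = L ∧
    entp p (fun ω : (Fin L → ZMod p) × (Fin LZ → ZMod p) =>
        ((fun x : {w : V // Q.connectedComponentMk w = C} => φ x.1 ω.1 ω.2), ω.1)) -
      entp p (fun ω : (Fin L → ZMod p) × (Fin LZ → ZMod p) => ω.1) = L := by
  obtain ⟨v₀, hv₀⟩ := hne
  have hfiber : ∀ v s s' a, Nat.card {z // φ v s z = a} = Nat.card {z // φ v s' z = a} :=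
    fun v => hsec.natCard_fiber_eq (hnd v).choose_spec
  obtain ⟨u₀, hu₀⟩ : ∃ u, Q.Adj v₀ u := by
    obtain ⟨v, u, hvu, hv, hu⟩ := hC
    exact SimpleGraph.ConnectedComponent.exists_adj_of_nontrivial ⟨v, hv, u, hu, hvu⟩
      (hsub v₀ hv₀)
  obtain ⟨dec₀, hdec₀⟩ := hcorr u₀ v₀ hu₀.symm
  have huniform : ∀ s a, Fintype.card (Fin L → ZMod p) * Nat.card {z // φ v₀ s z = a} =
      Fintype.card (Fin LZ → ZMod p) :=
    card_mul_natCard_fiber_eq le_rfl (hfiber u₀) (hfiber v₀) hdec₀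
  have hdet : ∀ w, Q.connectedComponentMk w = C →
      ∀ s z z', φ v₀ s z = φ v₀ s z' → φ w s z = φ w s z' := fun w hw _ _ _ =>
    hcorr.eq_of_reachable_s6 hfiber (SimpleGraph.ConnectedComponent.exact
      ((hsub v₀ hv₀).trans hw.symm))
  have hlog : Real.logb p (Fintype.card (Fin L → ZMod p)) = L := by
    rw [Fintype.card_fun, ZMod.card, Fintype.card_fin, Nat.cast_pow, Real.logb_pow,
      Real.logb_self_eq_one (by exact_mod_cast hp.one_lt), mul_one]
  refine ⟨?_, ?_⟩ <;> rw [← hlog]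
  · exact entp_pi_sub_entp_fst (fun x : {w // w ∈ Vq} => φ x.1) ⟨v₀, hv₀⟩
      (fun x => hdet x.1 (hsub x.1 x.2)) huniform
  · exact entp_pi_sub_entp_fst (fun x : {w // Q.connectedComponentMk w = C} => φ x.1)
      ⟨v₀, hsub v₀ hv₀⟩ (fun x => hdet x.1 x.2) huniform

open Classical in
/-- Noise Alignment for Qualified Component: For a non-degenerate CDS
instance `(Q, U)` and a CDS scheme over `F_p` with `N = L` (rate `1/2`), consider a
qualified component `C` of `Q` containing at least two vertices, with vertex set
`V_Q = {w | Q.connectedComponentMk w = C}`.  Then for every nonempty subset `V_q ⊆ V_Q`,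
the tuple of signals of the vertices of `V_q` satisfies
`H(V_q | S) = H(V_Q | S) = L` in `p`-ary units, where the sample space is the secret–noise
pair `(S, Z)` uniform on `F_p^L × F_p^{L_Z}` and `H(X | S) = H(X, S) − H(S)`. -/
theorem cds_noise_alignment_qualified_component {V : Type*} [Fintype V] [DecidableEq V]
    (Q U : SimpleGraph V)
    (p L LZ : ℕ) (hp : p.Prime) [NeZero p]
    (hdisj : ∀ v u : V, ¬ (Q.Adj v u ∧ U.Adj v u))
    (hnd : ∀ v : V, ∃ u : V, U.Adj v u)
    (φ : V → (Fin L → ZMod p) → (Fin LZ → ZMod p) → (Fin L → ZMod p))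
    (hcorr : CDSCorrect Q φ) (hsec : CDSSecure U φ)
    (C : Q.ConnectedComponent)
    (hC : ∃ v u : V, v ≠ u ∧ Q.connectedComponentMk v = C ∧ Q.connectedComponentMk u = C)
    (Vq : Finset V) (hne : Vq.Nonempty)
    (hsub : ∀ v ∈ Vq, Q.connectedComponentMk v = C) :
    entp p (fun ω : (Fin L → ZMod p) × (Fin LZ → ZMod p) =>
        ((fun x : {w : V // w ∈ Vq} => φ x.1 ω.1 ω.2), ω.1)) -
      entp p (fun ω : (Fin L → ZMod p) × (Fin LZ → ZMod p) => ω.1) = L ∧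
    entp p (fun ω : (Fin L → ZMod p) × (Fin LZ → ZMod p) =>
        ((fun x : {w : V // Q.connectedComponentMk w = C} => φ x.1 ω.1 ω.2), ω.1)) -
      entp p (fun ω : (Fin L → ZMod p) × (Fin LZ → ZMod p) => ω.1) = L :=
  cds_noise_alignment_qualified_component_general Q U p L LZ hp hnd φ hcorr hsec C hC Vq hne hsub
end

section
/- (Signal Alignment for Unqualified Edge within Qualified Component) Let G be a non-degenerate CDS instance and consider a CDS scheme for G over F_p with parameters (L, L_Z, N) where N = L (rate 1/2). Then for every unqualified edge {v,u} whose two endpoints lie in the same qualified component of G, the joint entropy of the two signals satisfies H(v, u) = L in p-ary units. -/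
open scoped BigOperators

namespace CDSAux1
open Finset

variable {V : Type*} {p L LZ : ℕ} [NeZero p]
  (φ : V → (Fin L → ZMod p) → (Fin LZ → ZMod p) → (Fin L → ZMod p))

def cnt (w : V) (s α : Fin L → ZMod p) : ℕ :=
  (univ.filter fun z : Fin LZ → ZMod p => φ w s z = α).card

lemma cnt_eq_natCard (w : V) (s α : Fin L → ZMod p) :
    cnt φ w s α = Nat.card {z : Fin LZ → ZMod p // φ w s z = α} := by
  rw [Nat.card_eq_fintype_card, Fintype.card_subtype, cnt]

lemma pair_natCard_eq_filter (w w' : V) (s α β : Fin L → ZMod p) :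
    Nat.card {z : Fin LZ → ZMod p // φ w s z = α ∧ φ w' s z = β} =
      (univ.filter fun z : Fin LZ → ZMod p => φ w s z = α ∧ φ w' s z = β).card := by
  rw [Nat.card_eq_fintype_card, Fintype.card_subtype]

lemma cnt_indep {U : SimpleGraph V} (hsec : CDSSecure U φ) {w w' : V} (h : U.Adj w w')
    (s s' α : Fin L → ZMod p) : cnt φ w s α = cnt φ w s' α := by
  have key : ∀ t : Fin L → ZMod p, cnt φ w t α =
      ∑ b : Fin L → ZMod p,
        Nat.card {z : Fin LZ → ZMod p // φ w t z = α ∧ φ w' t z = b} := by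
    intro t
    rw [cnt, Finset.card_eq_sum_card_fiberwise
      (f := fun z => φ w' t z) (t := univ) (fun x _ => mem_univ _)]
    refine Finset.sum_congr rfl fun b _ => ?_
    rw [pair_natCard_eq_filter, Finset.filter_filter]
  rw [key s, key s']
  exact Finset.sum_congr rfl fun b _ => hsec w w' h s s' α b

lemma sum_cnt (w : V) (s : Fin L → ZMod p) :
    ∑ α : Fin L → ZMod p, cnt φ w s α = p ^ LZ := by
  have : ((univ : Finset (Fin LZ → ZMod p))).card =
      ∑ α : Fin L → ZMod p, cnt φ w s α :=
    Finset.card_eq_sum_card_fiberwise (f := fun z => φ w s z) (t := univ)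
      (fun x _ => mem_univ _)
  rw [← this, card_univ, Fintype.card_fun, ZMod.card, Fintype.card_fin]

lemma card_sig : Fintype.card (Fin L → ZMod p) = p ^ L := by
  rw [Fintype.card_fun, ZMod.card, Fintype.card_fin]

/-- Structural lemma for a qualified edge `{a,b}`: there is an `s`-indexed family of
bijections carrying the signal of `a` to that of `b`, and the count function of `a`
is constant in `α`. -/
lemma edge_struct {Q U : SimpleGraph V} (hnd : ∀ v : V, ∃ u : V, U.Adj v u)
    (hcorr : CDSCorrect Q φ) (hsec : CDSSecure U φ) {a b : V} (hab : Q.Adj a b) :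
    (∃ f : (Fin L → ZMod p) → (Fin L → ZMod p) → (Fin L → ZMod p),
      (∀ s, Function.Bijective (f s)) ∧ ∀ s z, φ b s z = f s (φ a s z)) ∧
    (∀ s α α', cnt φ a s α = cnt φ a s α') := by
  classical
  obtain ⟨g, hg⟩ := hcorr a b hab
  obtain ⟨a', ha'⟩ := hnd a
  obtain ⟨b', hb'⟩ := hnd b
  set Ps : (Fin L → ZMod p) → Finset ((Fin L → ZMod p) × (Fin L → ZMod p)) :=
    fun s => univ.image (fun z : Fin LZ → ZMod p => (φ a s z, φ b s z)) with hPs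
  set Ia : (Fin L → ZMod p) → Finset (Fin L → ZMod p) :=
    fun s => univ.image (φ a s) with hIa
  set Ib : (Fin L → ZMod p) → Finset (Fin L → ZMod p) :=
    fun s => univ.image (φ b s) with hIb
  -- membership in image iff positive count
  have memIa : ∀ s α, α ∈ Ia s ↔ 0 < cnt φ a s α := by
    intro s α
    rw [hIa]
    simp only [mem_image, mem_univ, true_and]
    rw [cnt, Finset.card_pos, Finset.filter_nonempty_iff]
    simp
  have memIb : ∀ s β, β ∈ Ib s ↔ 0 < cnt φ b s β := by
    intro s β
    rw [hIb]
    simp only [mem_image, mem_univ, true_and]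
    rw [cnt, Finset.card_pos, Finset.filter_nonempty_iff]
    simp
  -- images are s-independent
  have Ia_indep : ∀ s s', Ia s = Ia s' := by
    intro s s'; ext α
    rw [memIa, memIa, cnt_indep φ hsec ha' s s']
  have Ib_indep : ∀ s s', Ib s = Ib s' := by
    intro s s'; ext β
    rw [memIb, memIb, cnt_indep φ hsec hb' s s']
  -- disjointness of the Ps
  have Pdisj : ∀ s s' : Fin L → ZMod p, s ≠ s' → Disjoint (Ps s) (Ps s') := by
    intro s s' hne
    rw [Finset.disjoint_left]
    intro x hx hx'
    simp only [hPs, mem_image, mem_univ, true_and] at hx hx'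
    obtain ⟨z, hz⟩ := hx
    obtain ⟨z', hz'⟩ := hx'
    apply hne
    calc s = g (φ a s z) (φ b s z) := (hg s z).symm
    _ = g x.1 x.2 := by rw [← hz]
    _ = g (φ a s' z') (φ b s' z') := by rw [← hz']
    _ = s' := hg s' z'
  -- projections of Ps
  have Pfst : ∀ s, (Ps s).image Prod.fst = Ia s := by
    intro s; rw [hPs, hIa, Finset.image_image]; rfl
  have Psnd : ∀ s, (Ps s).image Prod.snd = Ib s := by
    intro s; rw [hPs, hIb, Finset.image_image]; rfl
  have hPa : ∀ s, (Ia s).card ≤ (Ps s).card := by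
    intro s; rw [← Pfst]; exact Finset.card_image_le
  have hPb : ∀ s, (Ib s).card ≤ (Ps s).card := by
    intro s; rw [← Psnd]; exact Finset.card_image_le
  have Psub : ∀ s, Ps s ⊆ Ia 0 ×ˢ Ib 0 := by
    intro s x hx
    simp only [hPs, mem_image, mem_univ, true_and] at hx
    obtain ⟨z, hz⟩ := hx
    rw [Finset.mem_product, ← hz, Ia_indep 0 s, Ib_indep 0 s]
    exact ⟨by rw [hIa]; exact mem_image_of_mem _ (mem_univ z),
      by rw [hIb]; exact mem_image_of_mem _ (mem_univ z)⟩
  -- total count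
  have hsum_le : ∑ s : Fin L → ZMod p, (Ps s).card ≤ (Ia 0).card * (Ib 0).card := by
    rw [← Finset.card_biUnion (fun s _ t _ hst => Pdisj s t hst), ← Finset.card_product]
    exact Finset.card_le_card (Finset.biUnion_subset.2 fun s _ => Psub s)
  have hIbpos : 0 < (Ib 0).card := by
    rw [Finset.card_pos, hIb]
    exact (Finset.image_nonempty).2 univ_nonempty
  have hIapos : 0 < (Ia 0).card := by
    rw [Finset.card_pos, hIa]
    exact (Finset.image_nonempty).2 univ_nonempty
  have cardS : Fintype.card (Fin L → ZMod p) = p ^ L := card_sig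
  -- lower bounds give m_a = m_b = p ^ L
  have hb_lb : ∀ s, (Ib 0).card ≤ (Ps s).card := by
    intro s; rw [Ib_indep 0 s]; exact hPb s
  have ha_lb : ∀ s, (Ia 0).card ≤ (Ps s).card := by
    intro s; rw [Ia_indep 0 s]; exact hPa s
  have hbig : p ^ L * (Ib 0).card ≤ (Ia 0).card * (Ib 0).card := by
    calc p ^ L * (Ib 0).card = ∑ _s : Fin L → ZMod p, (Ib 0).card := by
          rw [Finset.sum_const, card_univ, cardS, smul_eq_mul]
    _ ≤ ∑ s : Fin L → ZMod p, (Ps s).card := Finset.sum_le_sum fun s _ => hb_lb s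
    _ ≤ _ := hsum_le
  have hbig' : p ^ L * (Ia 0).card ≤ (Ia 0).card * (Ib 0).card := by
    calc p ^ L * (Ia 0).card = ∑ _s : Fin L → ZMod p, (Ia 0).card := by
          rw [Finset.sum_const, card_univ, cardS, smul_eq_mul]
    _ ≤ ∑ s : Fin L → ZMod p, (Ps s).card := Finset.sum_le_sum fun s _ => ha_lb s
    _ ≤ _ := hsum_le
  have hma : (Ia 0).card = p ^ L := by
    have h1 : p ^ L ≤ (Ia 0).card := Nat.le_of_mul_le_mul_right hbig hIbpos
    have h2 : (Ia 0).card ≤ p ^ L := by rw [← cardS, ← card_univ]; exact card_le_card (subset_univ _)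
    omega
  have hmb : (Ib 0).card = p ^ L := by
    have h1 : p ^ L ≤ (Ib 0).card := by
      rw [mul_comm] at hbig'
      exact Nat.le_of_mul_le_mul_left hbig' hIapos
    have h2 : (Ib 0).card ≤ p ^ L := by rw [← cardS, ← card_univ]; exact card_le_card (subset_univ _)
    omega
  have Ia_univ : ∀ s, Ia s = univ := by
    intro s
    rw [Ia_indep s 0]
    exact Finset.eq_univ_of_card _ (by rw [hma, cardS])
  have Ib_univ : ∀ s, Ib s = univ := by
    intro s
    rw [Ib_indep s 0]
    exact Finset.eq_univ_of_card _ (by rw [hmb, cardS])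
  -- each Ps s has card exactly p ^ L
  have Pcard : ∀ s, (Ps s).card = p ^ L := by
    have hub : ∀ s, (Ps s).card ≤ p ^ L := by
      by_contra hcon
      push_neg at hcon
      obtain ⟨s₀, hs₀⟩ := hcon
      have hstrict : ∑ _s : Fin L → ZMod p, p ^ L < ∑ s : Fin L → ZMod p, (Ps s).card :=
        Finset.sum_lt_sum (fun s _ => by rw [← hma]; exact ha_lb s) ⟨s₀, mem_univ _, hs₀⟩
      rw [Finset.sum_const, card_univ, cardS, smul_eq_mul] at hstrict
      have := lt_of_lt_of_le hstrict (le_trans hsum_le (by rw [hma, hmb]))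
      exact lt_irrefl _ this
    intro s
    exact le_antisymm (hub s) (by rw [← hma]; exact ha_lb s)
  -- fst is injective on Ps s
  have Pinj : ∀ s, Set.InjOn Prod.fst ((Ps s) : Set ((Fin L → ZMod p) × (Fin L → ZMod p))) := by
    intro s
    apply Finset.injOn_of_card_image_eq
    rw [Pfst, Ia_univ, card_univ, cardS, Pcard]
  -- existence of preimages
  have hex : ∀ s α, ∃ z : Fin LZ → ZMod p, φ a s z = α := by
    intro s α
    have : α ∈ Ia s := by rw [Ia_univ]; exact mem_univ _
    rw [hIa] at this
    simpa using this
  -- the function f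
  set f : (Fin L → ZMod p) → (Fin L → ZMod p) → (Fin L → ZMod p) :=
    fun s α => φ b s (hex s α).choose with hf
  have hmemP : ∀ s (z : Fin LZ → ZMod p), (φ a s z, φ b s z) ∈ Ps s := by
    intro s z; rw [hPs]; exact mem_image_of_mem _ (mem_univ z)
  have hfb : ∀ s z, φ b s z = f s (φ a s z) := by
    intro s z
    have hz' : φ a s ((hex s (φ a s z)).choose) = φ a s z := (hex s (φ a s z)).choose_spec
    have h1 := hmemP s z
    have h2 := hmemP s ((hex s (φ a s z)).choose)
    rw [hz'] at h2
    have heq := Pinj s (Finset.mem_coe.2 h1) (Finset.mem_coe.2 h2) rfl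
    exact congrArg Prod.snd heq
  have hfbij : ∀ s, Function.Bijective (f s) := by
    intro s
    rw [← Finite.surjective_iff_bijective]
    intro β
    have : β ∈ Ib s := by rw [Ib_univ]; exact mem_univ _
    rw [hIb] at this
    simp only [mem_image, mem_univ, true_and] at this
    obtain ⟨z, hz⟩ := this
    exact ⟨φ a s z, by rw [← hfb, hz]⟩
  have hgraph : ∀ s α, (α, f s α) ∈ Ps s := by
    intro s α
    have h2 := hmemP s ((hex s α).choose)
    rw [(hex s α).choose_spec] at h2
    exact h2
  have hs_inj : ∀ α, Function.Injective (fun s => f s α) := by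
    intro α s s' h
    by_contra hne
    have hd := Pdisj s s' hne
    rw [Finset.disjoint_left] at hd
    have h' : f s α = f s' α := h
    exact hd (hgraph s α) (by rw [h']; exact hgraph s' α)
  have hs_surj : ∀ α β, ∃ s, f s α = β := by
    intro α β
    exact (Finite.injective_iff_bijective.1 (hs_inj α)).2 β
  have transfer : ∀ s α, cnt φ a s α = cnt φ b s (f s α) := by
    intro s α
    rw [cnt, cnt]
    apply congrArg
    apply Finset.filter_congr
    intro z _
    constructor
    · intro h; rw [hfb s z, h]
    · intro h
      exact (hfbij s).1 (by rw [← hfb s z, h])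
  refine ⟨⟨f, hfbij, hfb⟩, ?_⟩
  intro s α α'
  obtain ⟨s'', hs''⟩ := hs_surj α' (f s α)
  calc cnt φ a s α = cnt φ b s (f s α) := transfer s α
  _ = cnt φ b s'' (f s α) := cnt_indep φ hsec hb' s s'' _
  _ = cnt φ b s'' (f s'' α') := by rw [hs'']
  _ = cnt φ a s'' α' := (transfer s'' α').symm
  _ = cnt φ a s α' := cnt_indep φ hsec ha' s'' s α'



lemma walk_struct {Q U : SimpleGraph V} (hnd : ∀ v : V, ∃ u : V, U.Adj v u)
    (hcorr : CDSCorrect Q φ) (hsec : CDSSecure U φ) :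
    ∀ {x y : V}, Q.Walk x y →
    ∃ f : (Fin L → ZMod p) → (Fin L → ZMod p) → (Fin L → ZMod p),
      (∀ s, Function.Bijective (f s)) ∧ ∀ s z, φ y s z = f s (φ x s z) := by
  intro x y w
  induction w with
  | nil => exact ⟨fun _ => id, fun _ => Function.bijective_id, fun _ _ => rfl⟩
  | cons h w ih =>
    obtain ⟨⟨f1, hf1, hfb1⟩, -⟩ := edge_struct φ hnd hcorr hsec h
    obtain ⟨f2, hf2, hfb2⟩ := ih
    exact ⟨fun s => f2 s ∘ f1 s, fun s => (hf2 s).comp (hf1 s), fun s z => by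
      rw [hfb2 s z, hfb1 s z]; rfl⟩


theorem main_proof {V : Type*} [Fintype V] (Q U : SimpleGraph V)
    (p L LZ : ℕ) (hp : p.Prime) [NeZero p]
    (hdisj : ∀ v u : V, ¬ (Q.Adj v u ∧ U.Adj v u))
    (hnd : ∀ v : V, ∃ u : V, U.Adj v u)
    (φ : V → (Fin L → ZMod p) → (Fin LZ → ZMod p) → (Fin L → ZMod p))
    (hcorr : CDSCorrect Q φ) (hsec : CDSSecure U φ)
    (v u : V) (hvu : U.Adj v u) (hreach : Q.Reachable v u) :
    entp p (fun ω : (Fin L → ZMod p) × (Fin LZ → ZMod p) =>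
        (φ v ω.1 ω.2, φ u ω.1 ω.2)) = L := by
  classical
  obtain ⟨w⟩ := hreach
  have hvne : v ≠ u := hvu.ne
  obtain ⟨x, hvx⟩ : ∃ x, Q.Adj v x := by
    cases w with
    | nil => exact absurd rfl hvne
    | cons h _ => exact ⟨_, h⟩
  obtain ⟨v', hvv'⟩ := hnd v
  obtain ⟨-, hconst⟩ := edge_struct φ hnd hcorr hsec hvx
  obtain ⟨f, hfbij, hfb⟩ := walk_struct φ hnd hcorr hsec w
  set c := cnt φ v 0 0 with hc
  have hcnt : ∀ s α, cnt φ v s α = c := fun s α => by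
    rw [cnt_indep φ hsec hvv' s 0 α, hconst 0 α 0]
  have hsumc : p ^ L * c = p ^ LZ := by
    have hs0 := sum_cnt φ v 0
    rw [Finset.sum_congr rfl (fun α _ => hcnt 0 α), Finset.sum_const, card_univ,
      card_sig, smul_eq_mul] at hs0
    exact hs0
  have hppos : 0 < p := Nat.pos_of_ne_zero (NeZero.ne p)
  have hcpos : 0 < c := by
    rcases Nat.eq_zero_or_pos c with h | h
    · exfalso
      have := pow_pos hppos LZ
      rw [h, mul_zero] at hsumc
      omega
    · exact h
  -- the alignment map is independent of the secret
  have hF : ∀ s α, f s α = f 0 α := by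
    intro s α
    have hpos : 0 < cnt φ v s α := hcnt s α ▸ hcpos
    rw [cnt, Finset.card_pos] at hpos
    obtain ⟨z₀, hz₀m⟩ := hpos
    have hz₀ : φ v s z₀ = α := (Finset.mem_filter.1 hz₀m).2
    have h1 : 0 < Nat.card {z : Fin LZ → ZMod p // φ v s z = α ∧ φ u s z = f s α} := by
      rw [pair_natCard_eq_filter, Finset.card_pos]
      exact ⟨z₀, Finset.mem_filter.2 ⟨mem_univ _, hz₀, by rw [hfb s z₀, hz₀]⟩⟩
    rw [hsec v u hvu s 0 α (f s α), pair_natCard_eq_filter, Finset.card_pos] at h1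
    obtain ⟨z₁, hz₁⟩ := h1
    obtain ⟨-, hz₁v, hz₁u⟩ := Finset.mem_filter.1 hz₁
    rw [hfb 0 z₁, hz₁v] at hz₁u
    exact hz₁u.symm
  -- pair counts
  have hpc : ∀ (α β : Fin L → ZMod p) (s : Fin L → ZMod p),
      Nat.card {z : Fin LZ → ZMod p // φ v s z = α ∧ φ u s z = β} =
      if β = f 0 α then c else 0 := by
    intro α β s
    rw [pair_natCard_eq_filter]
    by_cases hb : β = f 0 α
    · rw [if_pos hb, ← hcnt s α, cnt]
      apply congrArg
      apply Finset.filter_congr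
      intro z _
      constructor
      · exact fun h => h.1
      · intro h
        exact ⟨h, by rw [hfb s z, hF s, h, ← hb]⟩
    · rw [if_neg hb, Finset.card_eq_zero, Finset.filter_eq_empty_iff]
      intro z _
      rintro ⟨h1, h2⟩
      exact hb (by rw [← h2, hfb s z, hF s, h1])
  -- total counts over the product sample space
  have htot : ∀ α β : Fin L → ZMod p,
      Nat.card {ω : (Fin L → ZMod p) × (Fin LZ → ZMod p) //
        (φ v ω.1 ω.2, φ u ω.1 ω.2) = (α, β)} =
      p ^ L * (if β = f 0 α then c else 0) := by
    intro α β
    have e1 : {ω : (Fin L → ZMod p) × (Fin LZ → ZMod p) //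
          (φ v ω.1 ω.2, φ u ω.1 ω.2) = (α, β)} ≃
        Σ s : Fin L → ZMod p, {z : Fin LZ → ZMod p // φ v s z = α ∧ φ u s z = β} :=
      (Equiv.subtypeProdEquivSigmaSubtype
        (fun (s : Fin L → ZMod p) (z : Fin LZ → ZMod p) =>
          (φ v s z, φ u s z) = (α, β))).trans
        (Equiv.sigmaCongrRight fun s => Equiv.subtypeEquivRight fun z => by
          simp [Prod.ext_iff])
    rw [Nat.card_congr e1, Nat.card_eq_fintype_card, Fintype.card_sigma]
    have : ∀ s : Fin L → ZMod p,
        Fintype.card {z : Fin LZ → ZMod p // φ v s z = α ∧ φ u s z = β} =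
        if β = f 0 α then c else 0 := by
      intro s
      rw [← Nat.card_eq_fintype_card, hpc α β s]
    rw [Finset.sum_congr rfl fun s _ => this s, Finset.sum_const, card_univ, card_sig,
      smul_eq_mul]
  -- the probability mass function
  have hpLne : ((p:ℝ) ^ L) ≠ 0 := by positivity
  have hprb : ∀ α β : Fin L → ZMod p,
      prb (fun ω : (Fin L → ZMod p) × (Fin LZ → ZMod p) =>
        (φ v ω.1 ω.2, φ u ω.1 ω.2)) (α, β) =
      if β = f 0 α then ((p:ℝ) ^ L)⁻¹ else 0 := by
    intro α β
    rw [prb, htot α β, Fintype.card_prod, card_sig, card_sig]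
    by_cases hb : β = f 0 α
    · rw [if_pos hb, if_pos hb, ← hsumc]
      push_cast
      have hcne : (c:ℝ) ≠ 0 := by exact_mod_cast hcpos.ne'
      field_simp
    · rw [if_neg hb, if_neg hb, mul_zero]
      simp
  -- entropy computation
  rw [entp, Fintype.sum_prod_type]
  have hlogb : Real.logb p (((p:ℝ) ^ L)⁻¹) = -L := by
    have h1 : (1:ℝ) < (p:ℝ) := by exact_mod_cast hp.one_lt
    rw [Real.logb_inv, Real.logb_pow, Real.logb_self_eq_one h1]
    ring
  have hinner : ∀ α : Fin L → ZMod p,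
      (∑ β : Fin L → ZMod p,
        -(prb (fun ω : (Fin L → ZMod p) × (Fin LZ → ZMod p) =>
            (φ v ω.1 ω.2, φ u ω.1 ω.2)) (α, β) *
          Real.logb p (prb (fun ω : (Fin L → ZMod p) × (Fin LZ → ZMod p) =>
            (φ v ω.1 ω.2, φ u ω.1 ω.2)) (α, β)))) = ((p:ℝ) ^ L)⁻¹ * L := by
    intro α
    have hterm : ∀ β : Fin L → ZMod p,
        -(prb (fun ω : (Fin L → ZMod p) × (Fin LZ → ZMod p) =>
            (φ v ω.1 ω.2, φ u ω.1 ω.2)) (α, β) *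
          Real.logb p (prb (fun ω : (Fin L → ZMod p) × (Fin LZ → ZMod p) =>
            (φ v ω.1 ω.2, φ u ω.1 ω.2)) (α, β))) =
        if β = f 0 α then ((p:ℝ) ^ L)⁻¹ * L else 0 := by
      intro β
      rw [hprb α β]
      by_cases hb : β = f 0 α
      · rw [if_pos hb, if_pos hb, hlogb]
        ring
      · rw [if_neg hb, if_neg hb]
        simp
    rw [Finset.sum_congr rfl fun β _ => hterm β, Finset.sum_ite_eq' univ (f 0 α)
      (fun _ => ((p:ℝ) ^ L)⁻¹ * (L:ℝ))]
    simp
  rw [Finset.sum_congr rfl fun α _ => hinner α, Finset.sum_const, card_univ, card_sig,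
    nsmul_eq_mul]
  push_cast
  field_simp

theorem cds_signal_alignment_unqualified_edge {V : Type*} [Fintype V] (Q U : SimpleGraph V)
    (p L LZ : ℕ) (hp : p.Prime) [NeZero p]
    (hdisj : ∀ v u : V, ¬ (Q.Adj v u ∧ U.Adj v u))
    (hnd : ∀ v : V, ∃ u : V, U.Adj v u)
    (φ : V → (Fin L → ZMod p) → (Fin LZ → ZMod p) → (Fin L → ZMod p))
    (hcorr : CDSCorrect Q φ) (hsec : CDSSecure U φ)
    (v u : V) (hvu : U.Adj v u) (hreach : Q.Reachable v u) :
    entp p (fun ω : (Fin L → ZMod p) × (Fin LZ → ZMod p) =>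
        (φ v ω.1 ω.2, φ u ω.1 ω.2)) = L := by
  exact CDSAux1.main_proof Q U p L LZ hp hdisj hnd φ hcorr hsec v u hvu hreach
end CDSAux1

/-- Signal Alignment for Unqualified Edge within Qualified Component: For a
non-degenerate CDS instance `(Q, U)` and a CDS scheme over `F_p` with `N = L` (rate `1/2`),
every unqualified edge `{v,u}` whose endpoints lie in the same qualified component of `Q`
(i.e. `Q.Reachable v u`) satisfies `H(v, u) = L` in `p`-ary units, where the sample space
is the secret–noise pair `(S, Z)` uniform on `F_p^L × F_p^{L_Z}`. -/
theorem cds_signal_alignment_unqualified_edge {V : Type*} [Fintype V] (Q U : SimpleGraph V)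
    (p L LZ : ℕ) (hp : p.Prime) [NeZero p]
    (hdisj : ∀ v u : V, ¬ (Q.Adj v u ∧ U.Adj v u))
    (hnd : ∀ v : V, ∃ u : V, U.Adj v u)
    (φ : V → (Fin L → ZMod p) → (Fin LZ → ZMod p) → (Fin L → ZMod p))
    (hcorr : CDSCorrect Q φ) (hsec : CDSSecure U φ)
    (v u : V) (hvu : U.Adj v u) (hreach : Q.Reachable v u) :
    entp p (fun ω : (Fin L → ZMod p) × (Fin LZ → ZMod p) =>
        (φ v ω.1 ω.2, φ u ω.1 ω.2)) = L := by
  exact CDSAux1.main_proof Q U p L LZ hp hdisj hnd φ hcorr hsec v u hvu hreach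
end

section
/- (Noise Alignment for Linear Schemes) Let p be a prime and let F_v, F_u ∈ F_p^{N×L} and H_v, H_u ∈ F_p^{N×L_Z}. Suppose v and u each satisfy the linear security condition individually (for every s ∈ F_p^L there exists z ∈ F_p^{L_Z} with F_v s = H_v z, and likewise for u), and suppose the pair (v,u) satisfies the linear correctness condition (for all s ∈ F_p^L and z ∈ F_p^{L_Z}, if F_v s = H_v z and F_u s = H_u z then s = 0). Then the intersection of the row space of H_v and the row space of H_u has dimension at least L. -/
/-!
By security there are linear lifts `gᵥ, gᵤ` of the secret into the noise space with
`Hᵥ gᵥ = Fᵥ` and `Hᵤ gᵤ = Fᵤ`. Two noises explaining the same secret through `v` (resp. `u`)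
differ by an element of `ker Hᵥ` (resp. `ker Hᵤ`), so correctness says exactly that
`s ↦ gᵥ s - gᵤ s` is injective modulo `ker Hᵥ ⊔ ker Hᵤ`, whence
`L + dim (ker Hᵥ ⊔ ker Hᵤ) ≤ L_Z`. Row spaces and kernels are mutual annihilators, so
`rowSpan Hᵥ ⊓ rowSpan Hᵤ` is the annihilator of `ker Hᵥ ⊔ ker Hᵤ` and has dimension
`L_Z - dim (ker Hᵥ ⊔ ker Hᵤ) ≥ L`.
-/

open Module LinearMap Submodule

/-- The row space of a matrix: the span of its rows. -/
def rowSpan {p N LZ : ℕ} (H : Matrix (Fin N) (Fin LZ) (ZMod p)) :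
    Submodule (ZMod p) (Fin LZ → ZMod p) :=
  Submodule.span (ZMod p) (Set.range fun i => H i)

theorem LinearMap.exists_comp_eq_of_range_le {R P M N : Type*} [Ring R] [AddCommGroup P]
    [Module R P] [Projective R P] [AddCommGroup M] [Module R M] [AddCommGroup N] [Module R N]
    (f : M →ₗ[R] N) (g : P →ₗ[R] N) (h : range g ≤ range f) :
    ∃ l : P →ₗ[R] M, f ∘ₗ l = g := by
  obtain ⟨l, hl⟩ := projective_lifting_property f.rangeRestrict
    (g.codRestrict (range f) fun x => h (mem_range_self g x)) f.surjective_rangeRestrict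
  exact ⟨l, ext fun x => congr_arg Subtype.val (LinearMap.congr_fun hl x)⟩

namespace Matrix

variable {K m m' n : Type*} [Field K]

theorem finrank_span_rows_add_finrank_ker [Fintype m] [Fintype n] (A : Matrix m n K) :
    finrank K (span K (Set.range A.row)) + finrank K (ker A.mulVecLin) = Fintype.card n := by
  rw [← finrank_fintype_fun_eq_card K, ← A.mulVecLin.finrank_range_add_finrank_ker]
  exact congrArg (· + _) A.rank_eq_finrank_span_row.symm

theorem span_range_row_fromRows (A : Matrix m n K) (B : Matrix m' n K) :
    span K (Set.range (fromRows A B).row) =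
      span K (Set.range A.row) ⊔ span K (Set.range B.row) := by
  rw [← span_union, ← Set.Sum.elim_range]
  rfl

theorem ker_mulVecLin_fromRows [Fintype n] (A : Matrix m n K) (B : Matrix m' n K) :
    ker (fromRows A B).mulVecLin = ker A.mulVecLin ⊓ ker B.mulVecLin := by
  ext v
  simp [fromRows_mulVec, funext_iff, Sum.forall]

theorem finrank_inf_span_rows_add_finrank_sup_ker [Fintype m] [Fintype m'] [Fintype n]
    (A : Matrix m n K) (B : Matrix m' n K) :
    finrank K ↥(span K (Set.range A.row) ⊓ span K (Set.range B.row))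
      + finrank K ↥(ker A.mulVecLin ⊔ ker B.mulVecLin) = Fintype.card n := by
  have hA := A.finrank_span_rows_add_finrank_ker
  have hB := B.finrank_span_rows_add_finrank_ker
  have hAB := (fromRows A B).finrank_span_rows_add_finrank_ker
  rw [span_range_row_fromRows, ker_mulVecLin_fromRows] at hAB
  have := finrank_sup_add_finrank_inf_eq (span K (Set.range A.row)) (span K (Set.range B.row))
  have := finrank_sup_add_finrank_inf_eq (ker A.mulVecLin) (ker B.mulVecLin)
  omega

end Matrix

theorem finrank_add_finrank_ker_sup_ker_le {K S Z W₁ W₂ : Type*} [DivisionRing K]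
    [AddCommGroup S] [Module K S] [AddCommGroup Z] [Module K Z] [FiniteDimensional K Z]
    [AddCommGroup W₁] [Module K W₁] [AddCommGroup W₂] [Module K W₂]
    (Fv : S →ₗ[K] W₁) (Hv : Z →ₗ[K] W₁) (Fu : S →ₗ[K] W₂) (Hu : Z →ₗ[K] W₂)
    (hv : range Fv ≤ range Hv) (hu : range Fu ≤ range Hu)
    (hcorr : ∀ s z, Fv s = Hv z → Fu s = Hu z → s = 0) :
    finrank K S + finrank K ↥(ker Hv ⊔ ker Hu) ≤ finrank K Z := by
  obtain ⟨gv, hgv⟩ := Hv.exists_comp_eq_of_range_le Fv hv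
  obtain ⟨gu, hgu⟩ := Hu.exists_comp_eq_of_range_le Fu hu
  let φ := (ker Hv ⊔ ker Hu).mkQ ∘ₗ (gv - gu)
  have hφ : Function.Injective φ := by
    refine (injective_iff_map_eq_zero φ).mpr fun s hs => ?_
    obtain ⟨a, ha, b, hb, hab⟩ := mem_sup.mp ((Submodule.Quotient.mk_eq_zero _).mp hs)
    refine hcorr s (gv s - a) ?_ ?_
    · rw [map_sub, mem_ker.mp ha, sub_zero, ← hgv, LinearMap.comp_apply]
    · have hgs : gv s = a + b + gu s := (eq_sub_iff_add_eq.mp hab).symm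
      rw [show gv s - a = gu s + b by rw [hgs]; abel, map_add, mem_ker.mp hb, add_zero, ← hgu,
        LinearMap.comp_apply]
  have := finrank_le_finrank_of_injective hφ
  have := (ker Hv ⊔ ker Hu).finrank_quotient_add_finrank
  omega

/-- Noise Alignment for Linear Schemes: Let `p` be a prime, and consider
linear signals `v = F_v S + H_v Z` and `u = F_u S + H_u Z`.  If `v` and `u` each satisfy
the linear security condition individually (for every secret `s` there is a noise `z`
with `F_v s = H_v z`, and likewise for `u`), and the pair `(v, u)` satisfies the linear
correctness condition (`F_v s = H_v z` and `F_u s = H_u z` imply `s = 0`), then the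
intersection of the row spaces of `H_v` and `H_u` has dimension at least `L`. -/
theorem linear_noise_alignment (p L LZ N : ℕ) [Fact p.Prime]
    (Fv Fu : Matrix (Fin N) (Fin L) (ZMod p))
    (Hv Hu : Matrix (Fin N) (Fin LZ) (ZMod p))
    (hsecv : ∀ s : Fin L → ZMod p, ∃ z : Fin LZ → ZMod p, Fv.mulVec s = Hv.mulVec z)
    (hsecu : ∀ s : Fin L → ZMod p, ∃ z : Fin LZ → ZMod p, Fu.mulVec s = Hu.mulVec z)
    (hcorr : ∀ (s : Fin L → ZMod p) (z : Fin LZ → ZMod p),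
      Fv.mulVec s = Hv.mulVec z → Fu.mulVec s = Hu.mulVec z → s = 0) :
    L ≤ Module.finrank (ZMod p) ↥(rowSpan Hv ⊓ rowSpan Hu) := by
  have range_le {F : Matrix (Fin N) (Fin L) (ZMod p)} {H : Matrix (Fin N) (Fin LZ) (ZMod p)}
      (hsec : ∀ s, ∃ z, F.mulVec s = H.mulVec z) : range F.mulVecLin ≤ range H.mulVecLin := by
    rintro _ ⟨s, rfl⟩
    obtain ⟨z, hz⟩ := hsec s
    exact ⟨z, hz.symm⟩
  have hkernels := finrank_add_finrank_ker_sup_ker_le Fv.mulVecLin Hv.mulVecLin Fu.mulVecLin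
    Hu.mulVecLin (range_le hsecv) (range_le hsecu) hcorr
  have hduality := Hv.finrank_inf_span_rows_add_finrank_sup_ker Hu
  simp only [finrank_fin_fun, Fintype.card_fin] at hkernels hduality
  change L ≤ finrank (ZMod p)
    ↥(span (ZMod p) (Set.range Hv.row) ⊓ span (ZMod p) (Set.range Hu.row))
  omega
end

section
/- (Signal Alignment for Linear Schemes) Let p be a prime and let F_v, F_u ∈ F_p^{N×L} and H_v, H_u ∈ F_p^{N×L_Z}. Suppose the pair (v,u) satisfies the linear security condition (for every s ∈ F_p^L there exists z ∈ F_p^{L_Z} with F_v s = H_v z and F_u s = H_u z). Then for every subset J ⊆ {1, …, N} of row indices, if the rows of H_v indexed by J are equal to the corresponding rows of H_u, then the rows of F_v indexed by J are equal to the corresponding rows of F_u. -/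
/-- Signal Alignment for Linear Schemes: Let `p` be a prime, and consider
linear signals `v = F_v S + H_v Z` and `u = F_u S + H_u Z`.  If the pair `(v, u)`
satisfies the linear security condition (for every secret `s` there is a noise `z` with
`F_v s = H_v z` and `F_u s = H_u z`), then for every subset `J` of row indices, if the
rows of `H_v` indexed by `J` agree with the corresponding rows of `H_u`, then the rows of
`F_v` indexed by `J` agree with the corresponding rows of `F_u`. -/
theorem linear_signal_alignment (p L LZ N : ℕ) (hp : p.Prime)
    (Fv Fu : Matrix (Fin N) (Fin L) (ZMod p))
    (Hv Hu : Matrix (Fin N) (Fin LZ) (ZMod p))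
    (hsec : ∀ s : Fin L → ZMod p, ∃ z : Fin LZ → ZMod p,
      Fv.mulVec s = Hv.mulVec z ∧ Fu.mulVec s = Hu.mulVec z)
    (J : Finset (Fin N)) (hJ : ∀ i ∈ J, Hv i = Hu i) :
    ∀ i ∈ J, Fv i = Fu i := by
  intro i hi
  funext j
  obtain ⟨z, h1, h2⟩ := hsec (Pi.single j 1)
  have hz : Hv.mulVec z i = Hu.mulVec z i := by
    simp [Matrix.mulVec, hJ i hi]
  have h := congrFun h1 i
  have h' := congrFun h2 i
  have : Fv.mulVec (Pi.single j 1) i = Fu.mulVec (Pi.single j 1) i := by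
    rw [h, h', hz]
  simpa [Matrix.mulVec_single] using this
end

section
/- (Secret Space Covered by Noise Space) Let p be a prime, let S be uniformly distributed on F_p^L and Z uniformly distributed on F_p^{L_Z} with S and Z independent, and let F ∈ F_p^{N×L} and H ∈ F_p^{N×L_Z}. Then the random vector F S + H Z is statistically independent of S if and only if the column space of F is contained in the column space of H (equivalently, for every s ∈ F_p^L there exists z ∈ F_p^{L_Z} with F s = H z). -/
/-- The column space of a matrix: the span of its columns. -/
def colSpan {p a b : ℕ} (M : Matrix (Fin a) (Fin b) (ZMod p)) :
    Submodule (ZMod p) (Fin a → ZMod p) :=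
  Submodule.span (ZMod p) (Set.range fun j => fun i => M i j)

/-- Secret Space Covered by Noise Space: Let `p` be a prime, `S` uniform on
`F_p^L`, `Z` uniform on `F_p^{L_Z}`, `S` and `Z` independent.  The random vector
`F S + H Z` is statistically independent of `S` (i.e. the number of noise values `z` with
`F s + H z = a` does not depend on the secret `s`) if and only if the column space of `F`
is contained in the column space of `H`, which holds iff for every `s` there exists `z`
with `F s = H z`. -/
theorem linear_security_iff_colspace (p L LZ N : ℕ) (hp : p.Prime)
    (F : Matrix (Fin N) (Fin L) (ZMod p)) (H : Matrix (Fin N) (Fin LZ) (ZMod p)) :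
    ((∀ (s₁ s₂ : Fin L → ZMod p) (a : Fin N → ZMod p),
        Nat.card {z : Fin LZ → ZMod p // F.mulVec s₁ + H.mulVec z = a} =
        Nat.card {z : Fin LZ → ZMod p // F.mulVec s₂ + H.mulVec z = a}) ↔
      colSpan F ≤ colSpan H) ∧
    (colSpan F ≤ colSpan H ↔
      ∀ s : Fin L → ZMod p, ∃ z : Fin LZ → ZMod p, F.mulVec s = H.mulVec z) := by
  haveI : Fact p.Prime := ⟨hp⟩
  have hrange : ∀ {a b : ℕ} (M : Matrix (Fin a) (Fin b) (ZMod p)),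
      colSpan M = LinearMap.range M.mulVecLin := by
    intro a b M
    rw [Matrix.range_mulVecLin]
    rfl
  have key : colSpan F ≤ colSpan H ↔
      ∀ s : Fin L → ZMod p, ∃ z : Fin LZ → ZMod p, F.mulVec s = H.mulVec z := by
    rw [hrange F, hrange H]
    constructor
    · intro h s
      obtain ⟨z, hz⟩ := h ⟨s, rfl⟩
      exact ⟨z, hz.symm⟩
    · rintro h x ⟨s, rfl⟩
      obtain ⟨z, hz⟩ := h s
      exact ⟨z, hz.symm⟩
  refine ⟨⟨fun hcard => ?_, fun hle s₁ s₂ a => ?_⟩, key⟩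
  · rw [key]
    intro s
    have h0 := hcard s 0 (F.mulVec s)
    have hpos : 0 < Nat.card {z : Fin LZ → ZMod p // F.mulVec s + H.mulVec z = F.mulVec s} := by
      have : Nonempty {z : Fin LZ → ZMod p // F.mulVec s + H.mulVec z = F.mulVec s} :=
        ⟨⟨0, by simp [Matrix.mulVec_zero]⟩⟩
      exact Nat.card_pos
    rw [h0] at hpos
    obtain ⟨⟨z, hz⟩⟩ := (Nat.card_pos_iff.mp hpos).1
    refine ⟨z, ?_⟩
    rw [Matrix.mulVec_zero, zero_add] at hz
    exact hz.symm
  · obtain ⟨z₀, hz₀⟩ := key.mp hle (s₁ - s₂)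
    have hz₀' : H.mulVec z₀ = F.mulVec s₁ - F.mulVec s₂ := by
      rw [← hz₀, Matrix.mulVec_sub]
    apply Nat.card_congr
    refine ⟨fun w => ⟨w.1 + z₀, ?_⟩, fun w => ⟨w.1 - z₀, ?_⟩, ?_, ?_⟩
    · obtain ⟨z, hz⟩ := w; rw [Matrix.mulVec_add, hz₀']; linear_combination hz
    · obtain ⟨z, hz⟩ := w; rw [Matrix.mulVec_sub, hz₀']; linear_combination hz
    · intro w; ext : 1; simp
    · intro w; ext : 1; simp
end

section
/- (Correctness Criterion for Linear Schemes) Let p be a prime, let S be uniformly distributed on F_p^L and Z uniformly distributed on F_p^{L_Z} with S and Z independent, and let F_v, F_u ∈ F_p^{N×L} and H_v, H_u ∈ F_p^{N×L_Z}. Then S is determined by the pair of signals (F_v S + H_v Z, F_u S + H_u Z) (i.e., there is a function g with S = g(F_v S + H_v Z, F_u S + H_u Z) almost surely) if and only if for all s ∈ F_p^L and z ∈ F_p^{L_Z}, F_v s = H_v z and F_u s = H_u z imply s = 0. -/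
/-- Correctness Criterion for Linear Schemes: Let `p` be a prime, `S`
uniform on `F_p^L`, `Z` uniform on `F_p^{L_Z}`, `S` and `Z` independent.  The secret `S`
is determined by the pair of linear signals `(F_v S + H_v Z, F_u S + H_u Z)` — i.e. there
is a decoding function `g` with `g (F_v s + H_v z, F_u s + H_u z) = s` for all secret and
noise realizations (equivalently, almost surely for the uniform distribution) — if and
only if for all `s, z`, `F_v s = H_v z` and `F_u s = H_u z` imply `s = 0`. -/
theorem linear_correctness_iff (p L LZ N : ℕ) (hp : p.Prime)
    (Fv Fu : Matrix (Fin N) (Fin L) (ZMod p))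
    (Hv Hu : Matrix (Fin N) (Fin LZ) (ZMod p)) :
    (∃ g : (Fin N → ZMod p) × (Fin N → ZMod p) → (Fin L → ZMod p),
        ∀ (s : Fin L → ZMod p) (z : Fin LZ → ZMod p),
          g (Fv.mulVec s + Hv.mulVec z, Fu.mulVec s + Hu.mulVec z) = s) ↔
      (∀ (s : Fin L → ZMod p) (z : Fin LZ → ZMod p),
        Fv.mulVec s = Hv.mulVec z → Fu.mulVec s = Hu.mulVec z → s = 0) := by
  constructor
  · rintro ⟨g, hg⟩ s z h1 h2
    have e1 := hg s (-z)
    have e2 := hg 0 0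
    simp only [Matrix.mulVec_neg, Matrix.mulVec_zero, add_zero] at e1 e2
    rw [h1, h2] at e1
    simp only [add_neg_cancel] at e1
    rw [e2] at e1
    exact e1.symm
  · intro h
    -- uniqueness of s given the signals
    have uniq : ∀ (s1 s2 : Fin L → ZMod p) (z1 z2 : Fin LZ → ZMod p),
        Fv.mulVec s1 + Hv.mulVec z1 = Fv.mulVec s2 + Hv.mulVec z2 →
        Fu.mulVec s1 + Hu.mulVec z1 = Fu.mulVec s2 + Hu.mulVec z2 → s1 = s2 := by
      intro s1 s2 z1 z2 e1 e2
      have h1 : Fv.mulVec (s1 - s2) = Hv.mulVec (z2 - z1) := by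
        rw [Matrix.mulVec_sub, Matrix.mulVec_sub]
        rw [sub_eq_sub_iff_add_eq_add]
        linear_combination e1
      have h2 : Fu.mulVec (s1 - s2) = Hu.mulVec (z2 - z1) := by
        rw [Matrix.mulVec_sub, Matrix.mulVec_sub]
        rw [sub_eq_sub_iff_add_eq_add]
        linear_combination e2
      have := h _ _ h1 h2
      exact sub_eq_zero.mp this
    classical
    refine ⟨fun y => if h' : ∃ s z, (Fv.mulVec s + Hv.mulVec z, Fu.mulVec s + Hu.mulVec z) = y
        then h'.choose else 0, ?_⟩
    intro s z
    have hex : ∃ s' z', (Fv.mulVec s' + Hv.mulVec z', Fu.mulVec s' + Hu.mulVec z')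
        = (Fv.mulVec s + Hv.mulVec z, Fu.mulVec s + Hu.mulVec z) := ⟨s, z, rfl⟩
    dsimp only
    rw [dif_pos hex]
    obtain ⟨z', hz'⟩ := hex.choose_spec
    have := Prod.mk.injEq .. ▸ hz'
    rw [Prod.mk.injEq] at hz'
    exact uniq _ _ _ _ hz'.1 hz'.2
end

section
/- (Linear Achievability, Theorem 2) Consider six vertices A_1, A_2, A_3, B_1, B_2, B_3 with qualified edges {A_1,B_1}, {B_1,A_2}, {A_2,B_2}, {B_2,A_3}, {A_3,B_3} and unqualified edges {A_1,B_2}, {A_1,B_3}, {A_2,B_3}, {A_3,B_1}. There exist matrices F_v ∈ F_2^{5×4} and H_v ∈ F_2^{5×9} for the six vertices v such that every qualified edge satisfies the linear correctness condition and every unqualified edge satisfies the linear security condition. Hence a linear CDS scheme with L = 4, N = 5, L_Z = 9 exists for this instance, achieving rate R = L/(2N) = 2/5. -/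
/-- Linear correctness condition for the pair of linear signals
`v = F_v S + H_v Z`, `u = F_u S + H_u Z`: the secret is determined by the pair of
signals, equivalently `F_v s = H_v z` and `F_u s = H_u z` imply `s = 0`. -/
def LinCorrect {p L LZ N : ℕ} (Fv Fu : Matrix (Fin N) (Fin L) (ZMod p))
    (Hv Hu : Matrix (Fin N) (Fin LZ) (ZMod p)) : Prop :=
  ∀ (s : Fin L → ZMod p) (z : Fin LZ → ZMod p),
    Fv.mulVec s = Hv.mulVec z → Fu.mulVec s = Hu.mulVec z → s = 0

/-- Linear security condition for the pair of linear signals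
`v = F_v S + H_v Z`, `u = F_u S + H_u Z`: the pair of signals is independent of the
secret, equivalently for every `s` there exists `z` with `F_v s = H_v z` and
`F_u s = H_u z`. -/
def LinSecure {p L LZ N : ℕ} (Fv Fu : Matrix (Fin N) (Fin L) (ZMod p))
    (Hv Hu : Matrix (Fin N) (Fin LZ) (ZMod p)) : Prop :=
  ∀ s : Fin L → ZMod p, ∃ z : Fin LZ → ZMod p,
    Fv.mulVec s = Hv.mulVec z ∧ Fu.mulVec s = Hu.mulVec z

lemma linCorrect_of_cert {p L LZ N : ℕ} {Fv Fu : Matrix (Fin N) (Fin L) (ZMod p)}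
    {Hv Hu : Matrix (Fin N) (Fin LZ) (ZMod p)} (G1 G2 : Matrix (Fin L) (Fin N) (ZMod p))
    (hF : G1 * Fv + G2 * Fu = 1) (hH : G1 * Hv + G2 * Hu = 0) :
    LinCorrect Fv Fu Hv Hu := by
  intro s z h1 h2
  have key : s = (G1 * Hv + G2 * Hu).mulVec z := by
    rw [Matrix.add_mulVec, ← Matrix.mulVec_mulVec, ← Matrix.mulVec_mulVec, ← h1, ← h2,
      Matrix.mulVec_mulVec, Matrix.mulVec_mulVec, ← Matrix.add_mulVec, hF, Matrix.one_mulVec]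
  rw [hH, Matrix.zero_mulVec] at key
  exact key

lemma linSecure_of_cert {p L LZ N : ℕ} {Fv Fu : Matrix (Fin N) (Fin L) (ZMod p)}
    {Hv Hu : Matrix (Fin N) (Fin LZ) (ZMod p)} (Nm : Matrix (Fin LZ) (Fin L) (ZMod p))
    (h1 : Hv * Nm = Fv) (h2 : Hu * Nm = Fu) : LinSecure Fv Fu Hv Hu := by
  intro s
  exact ⟨Nm.mulVec s, by rw [Matrix.mulVec_mulVec, h1], by rw [Matrix.mulVec_mulVec, h2]⟩

def FA1 : Matrix (Fin 5) (Fin 4) (ZMod 2) := !![1, 0, 0, 0; 0, 1, 0, 0; 0, 1, 0, 1; 0, 0, 1, 0; 1, 0, 0, 0]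

def HA1 : Matrix (Fin 5) (Fin 9) (ZMod 2) := !![1, 0, 0, 0, 0, 0, 0, 0, 0; 0, 1, 0, 0, 0, 0, 0, 0, 0; 0, 0, 0, 0, 1, 0, 0, 0, 0; 0, 0, 0, 0, 0, 1, 0, 0, 0; 0, 0, 0, 0, 0, 0, 0, 0, 1]

def FA2 : Matrix (Fin 5) (Fin 4) (ZMod 2) := !![1, 0, 0, 0; 0, 1, 0, 0; 0, 1, 1, 0; 0, 1, 1, 1; 0, 0, 1, 0]

def HA2 : Matrix (Fin 5) (Fin 9) (ZMod 2) := !![0, 1, 0, 0, 0, 0, 0, 0, 0; 0, 0, 1, 0, 0, 0, 0, 0, 0; 0, 0, 0, 0, 1, 0, 0, 0, 0; 0, 0, 0, 0, 0, 1, 0, 0, 0; 0, 0, 0, 0, 0, 0, 1, 0, 0]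

def FA3 : Matrix (Fin 5) (Fin 4) (ZMod 2) := !![1, 0, 0, 0; 0, 1, 0, 0; 0, 0, 0, 1; 1, 1, 0, 0; 0, 1, 0, 1]

def HA3 : Matrix (Fin 5) (Fin 9) (ZMod 2) := !![0, 0, 1, 0, 0, 0, 0, 0, 0; 0, 0, 0, 1, 0, 0, 0, 0, 0; 0, 0, 0, 0, 0, 1, 0, 0, 0; 0, 0, 0, 0, 0, 0, 1, 0, 0; 0, 0, 0, 0, 0, 0, 0, 1, 0]

def FB1 : Matrix (Fin 5) (Fin 4) (ZMod 2) := !![0, 0, 1, 0; 0, 0, 0, 1; 0, 0, 1, 1; 0, 0, 0, 1; 1, 0, 0, 0]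

def HB1 : Matrix (Fin 5) (Fin 9) (ZMod 2) := !![0, 0, 0, 0, 1, 0, 0, 0, 0; 0, 0, 0, 0, 0, 1, 0, 0, 0; 1, 0, 0, 0, 0, 0, 0, 0, 0; 0, 1, 0, 0, 0, 0, 0, 0, 0; 0, 0, 1, 0, 0, 0, 0, 0, 0]

def FB2 : Matrix (Fin 5) (Fin 4) (ZMod 2) := !![0, 0, 1, 0; 0, 0, 0, 1; 0, 1, 0, 0; 1, 1, 1, 1; 0, 0, 0, 1]

def HB2 : Matrix (Fin 5) (Fin 9) (ZMod 2) := !![0, 0, 0, 0, 0, 1, 0, 0, 0; 0, 0, 0, 0, 0, 0, 1, 0, 0; 0, 1, 0, 0, 0, 0, 0, 0, 0; 0, 0, 1, 0, 0, 0, 0, 0, 0; 0, 0, 0, 1, 0, 0, 0, 0, 0]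

def FB3 : Matrix (Fin 5) (Fin 4) (ZMod 2) := !![0, 0, 1, 0; 0, 0, 0, 1; 0, 1, 0, 0; 1, 1, 1, 1; 1, 0, 0, 0]

def HB3 : Matrix (Fin 5) (Fin 9) (ZMod 2) := !![0, 0, 0, 0, 0, 0, 1, 0, 0; 0, 0, 0, 0, 0, 0, 0, 1, 0; 0, 0, 1, 0, 0, 0, 0, 0, 0; 0, 0, 0, 1, 0, 0, 0, 0, 0; 0, 0, 0, 0, 0, 0, 0, 0, 1]

def G1_A1B1 : Matrix (Fin 4) (Fin 5) (ZMod 2) := !![1, 0, 0, 1, 0; 0, 0, 1, 1, 0; 0, 1, 1, 0, 0; 0, 1, 1, 1, 0]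

def G2_A1B1 : Matrix (Fin 4) (Fin 5) (ZMod 2) := !![0, 1, 1, 0, 0; 1, 1, 0, 0, 0; 1, 0, 0, 1, 0; 1, 1, 0, 1, 0]

def G1_B1A2 : Matrix (Fin 4) (Fin 5) (ZMod 2) := !![1, 0, 0, 0, 1; 1, 0, 0, 0, 0; 1, 1, 0, 0, 0; 1, 0, 0, 1, 1]

def G2_B1A2 : Matrix (Fin 4) (Fin 5) (ZMod 2) := !![0, 1, 1, 0, 0; 0, 0, 1, 0, 0; 0, 0, 1, 1, 0; 1, 1, 1, 0, 0]

def G1_A2B2 : Matrix (Fin 4) (Fin 5) (ZMod 2) := !![0, 1, 0, 0, 1; 1, 1, 0, 0, 1; 1, 1, 0, 1, 0; 1, 1, 0, 1, 1]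

def G2_A2B2 : Matrix (Fin 4) (Fin 5) (ZMod 2) := !![0, 1, 0, 1, 0; 0, 1, 1, 1, 0; 1, 0, 1, 1, 0; 1, 1, 1, 1, 0]

def G1_B2A3 : Matrix (Fin 4) (Fin 5) (ZMod 2) := !![0, 1, 0, 0, 1; 1, 0, 0, 1, 0; 0, 0, 0, 1, 1; 1, 0, 0, 1, 1]

def G2_B2A3 : Matrix (Fin 4) (Fin 5) (ZMod 2) := !![0, 1, 0, 1, 0; 1, 0, 1, 0, 0; 1, 1, 0, 0, 0; 1, 1, 1, 0, 0]

def G1_A3B3 : Matrix (Fin 4) (Fin 5) (ZMod 2) := !![1, 0, 0, 0, 1; 0, 0, 0, 0, 1; 1, 0, 0, 1, 0; 0, 1, 0, 1, 1]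

def G2_A3B3 : Matrix (Fin 4) (Fin 5) (ZMod 2) := !![0, 1, 1, 0, 0; 0, 1, 0, 0, 0; 1, 0, 1, 0, 0; 1, 1, 0, 1, 0]

def N_A1B2 : Matrix (Fin 9) (Fin 4) (ZMod 2) := !![1, 0, 0, 0; 0, 1, 0, 0; 1, 1, 1, 1; 0, 0, 0, 1; 0, 1, 0, 1; 0, 0, 1, 0; 0, 0, 0, 1; 0, 0, 0, 0; 1, 0, 0, 0]

def N_A1B3 : Matrix (Fin 9) (Fin 4) (ZMod 2) := !![1, 0, 0, 0; 0, 1, 0, 0; 0, 1, 0, 0; 1, 1, 1, 1; 0, 1, 0, 1; 0, 0, 1, 0; 0, 0, 1, 0; 0, 0, 0, 1; 1, 0, 0, 0]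

def N_A2B3 : Matrix (Fin 9) (Fin 4) (ZMod 2) := !![0, 0, 0, 0; 1, 0, 0, 0; 0, 1, 0, 0; 1, 1, 1, 1; 0, 1, 1, 0; 0, 1, 1, 1; 0, 0, 1, 0; 0, 0, 0, 1; 1, 0, 0, 0]

def N_A3B1 : Matrix (Fin 9) (Fin 4) (ZMod 2) := !![0, 0, 1, 1; 0, 0, 0, 1; 1, 0, 0, 0; 0, 1, 0, 0; 0, 0, 1, 0; 0, 0, 0, 1; 1, 1, 0, 0; 0, 1, 0, 1; 0, 0, 0, 0]

lemma corr_A1B1 : LinCorrect FA1 FB1 HA1 HB1 :=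
  linCorrect_of_cert G1_A1B1 G2_A1B1 (by decide) (by decide)

lemma corr_B1A2 : LinCorrect FB1 FA2 HB1 HA2 :=
  linCorrect_of_cert G1_B1A2 G2_B1A2 (by decide) (by decide)

lemma corr_A2B2 : LinCorrect FA2 FB2 HA2 HB2 :=
  linCorrect_of_cert G1_A2B2 G2_A2B2 (by decide) (by decide)

lemma corr_B2A3 : LinCorrect FB2 FA3 HB2 HA3 :=
  linCorrect_of_cert G1_B2A3 G2_B2A3 (by decide) (by decide)

lemma corr_A3B3 : LinCorrect FA3 FB3 HA3 HB3 :=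
  linCorrect_of_cert G1_A3B3 G2_A3B3 (by decide) (by decide)

lemma sec_A1B2 : LinSecure FA1 FB2 HA1 HB2 :=
  linSecure_of_cert N_A1B2 (by decide) (by decide)

lemma sec_A1B3 : LinSecure FA1 FB3 HA1 HB3 :=
  linSecure_of_cert N_A1B3 (by decide) (by decide)

lemma sec_A2B3 : LinSecure FA2 FB3 HA2 HB3 :=
  linSecure_of_cert N_A2B3 (by decide) (by decide)

lemma sec_A3B1 : LinSecure FA3 FB1 HA3 HB1 :=
  linSecure_of_cert N_A3B1 (by decide) (by decide)

/-- Linear Achievability of Theorem 2: For the six-vertex CDS instance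
with qualified edges `{A₁,B₁}, {B₁,A₂}, {A₂,B₂}, {B₂,A₃}, {A₃,B₃}` and unqualified edges
`{A₁,B₂}, {A₁,B₃}, {A₂,B₃}, {A₃,B₁}`, there exists a linear CDS scheme over `F_2` with
`L = 4`, `N = 5`, `L_Z = 9` (so every qualified edge satisfies the linear correctness
condition and every unqualified edge satisfies the linear security condition), achieving
rate `R = L/(2N) = 2/5`. -/
theorem cds_linear_achievability :
    ∃ (FA1 FA2 FA3 FB1 FB2 FB3 : Matrix (Fin 5) (Fin 4) (ZMod 2))
      (HA1 HA2 HA3 HB1 HB2 HB3 : Matrix (Fin 5) (Fin 9) (ZMod 2)),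
      LinCorrect FA1 FB1 HA1 HB1 ∧
      LinCorrect FB1 FA2 HB1 HA2 ∧
      LinCorrect FA2 FB2 HA2 HB2 ∧
      LinCorrect FB2 FA3 HB2 HA3 ∧
      LinCorrect FA3 FB3 HA3 HB3 ∧
      LinSecure FA1 FB2 HA1 HB2 ∧
      LinSecure FA1 FB3 HA1 HB3 ∧
      LinSecure FA2 FB3 HA2 HB3 ∧
      LinSecure FA3 FB1 HA3 HB1 :=
  ⟨FA1, FA2, FA3, FB1, FB2, FB3, HA1, HA2, HA3, HB1, HB2, HB3,
    corr_A1B1, corr_B1A2, corr_A2B2, corr_B2A3, corr_A3B3,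
    sec_A1B2, sec_A1B3, sec_A2B3, sec_A3B1⟩
end
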